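/- arXiv:1608.07614 — 8 statements merged into one kernel-verified Lean document; each statement's English description precedes it below -/
import Mathlib

section
/- Let τ be a permutation pattern of length k+1 and let G be a graph that can be represented by a τ-avoiding word. If x is a vertex of G with degree at least k, then every τ-avoiding word w representing G contains at most k occurrences of the letter x. -/
/-- Two letters `x` and `y` alternate in the word `w`: between any two occurrences of `x`
there is an occurrence of `y`, and between any two occurrences of `y` there is an
occurrence of `x`. -/
def Alternates {α : Type*} (w : List α) (x y : α) : Prop :=
  (∀ i j : ℕ, i < j → w[i]? = some x → w[j]? = some x →
      ∃ k : ℕ, i < k ∧ k < j ∧ w[k]? = some y) ∧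
  (∀ i j : ℕ, i < j → w[i]? = some y → w[j]? = some y →
      ∃ k : ℕ, i < k ∧ k < j ∧ w[k]? = some x)

/-- A word `w` over the vertex set of `G` represents `G`: every vertex occurs in `w`, and
two distinct vertices alternate in `w` iff they are adjacent in `G`. -/
def Represents {α : Type*} (G : SimpleGraph α) (w : List α) : Prop :=
  (∀ v : α, v ∈ w) ∧ ∀ x y : α, x ≠ y → (Alternates w x y ↔ G.Adj x y)

/-- A word `w` over the labels represents `G` via the (injective) labeling `f` of the
vertices: every letter of `w` is the label of a vertex, every vertex's label occurs in `w`,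
and the labels of two distinct vertices alternate in `w` iff the vertices are adjacent. -/
def RepresentsLab {V L : Type*} (G : SimpleGraph V) (f : V → L) (w : List L) : Prop :=
  (∀ l ∈ w, ∃ v : V, f v = l) ∧ (∀ v : V, f v ∈ w) ∧
  ∀ x y : V, x ≠ y → (Alternates w (f x) (f y) ↔ G.Adj x y)

/-- `w` avoids the pattern 123: it has no strictly increasing subsequence of length 3. -/
def Avoids123 {α : Type*} [LinearOrder α] (w : List α) : Prop :=
  ¬ ∃ (i j k : ℕ) (a b c : α), i < j ∧ j < k ∧
    w[i]? = some a ∧ w[j]? = some b ∧ w[k]? = some c ∧ a < b ∧ b < c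

/-- `w` avoids the pattern 132: there are no indices `i < j < k` with `w_i < w_k < w_j`. -/
def Avoids132 {α : Type*} [LinearOrder α] (w : List α) : Prop :=
  ¬ ∃ (i j k : ℕ) (a b c : α), i < j ∧ j < k ∧
    w[i]? = some a ∧ w[j]? = some b ∧ w[k]? = some c ∧ a < c ∧ c < b

/-- `w` is 2-uniform: every letter occurring in `w` occurs exactly twice. -/
def TwoUniform {α : Type*} (w : List α) : Prop :=
  ∀ x ∈ w, ∃ i j : ℕ, i ≠ j ∧ w[i]? = some x ∧ w[j]? = some x ∧
    ∀ k : ℕ, w[k]? = some x → k = i ∨ k = j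

/-- `s` and `τ` are order-isomorphic words: same length and entries in corresponding
positions compare the same way. -/
def OrderIsoWords {α β : Type*} [LinearOrder α] [LinearOrder β]
    (s : List α) (τ : List β) : Prop :=
  s.length = τ.length ∧
  ∀ (i j : ℕ) (a b : α) (c d : β),
    s[i]? = some a → s[j]? = some b → τ[i]? = some c → τ[j]? = some d →
    (a < b ↔ c < d)

/-- `w` contains the pattern `τ`: some subsequence of `w` is order-isomorphic to `τ`. -/
def ContainsPattern {α β : Type*} [LinearOrder α] [LinearOrder β]
    (w : List α) (τ : List β) : Prop :=
  ∃ s : List α, s.Sublist w ∧ OrderIsoWords s τ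

/-- `G` is 123-representable: after relabeling the vertices injectively by elements of some
linearly ordered set, `G` is represented by a 123-avoiding word. -/
def Rep123 {V : Type*} (G : SimpleGraph V) : Prop :=
  ∃ (L : Type) (inst : LinearOrder L) (f : V → L), Function.Injective f ∧
    ∃ w : List L, @Avoids123 L inst w ∧ RepresentsLab G f w

/-- `G` is 132-representable: after relabeling the vertices injectively by elements of some
linearly ordered set, `G` is represented by a 132-avoiding word. -/
def Rep132 {V : Type*} (G : SimpleGraph V) : Prop :=
  ∃ (L : Type) (inst : LinearOrder L) (f : V → L), Function.Injective f ∧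
    ∃ w : List L, @Avoids132 L inst w ∧ RepresentsLab G f w

/-!
Let `x` occur at least `k + 1` times in `w` and let `S` be a set of `k` neighbours of `x`. Each
`y ∈ S` alternates with `x`, so it occurs in each of the `k` gaps between consecutive occurrences
of `x`. Hence every arrangement `a ++ x :: b` of `S ∪ {x}` is a subsequence of `w`: take the
letters of `a` from the first `|a|` gaps, the `(|a|+1)`-st occurrence of `x`, and the letters of
`b` from the remaining gaps. One such arrangement is order-isomorphic to `τ`.
-/

namespace List

variable {α : Type*}

def SeparatesOccurrences (w : List α) (x y : α) : Prop :=
  ∀ u v z : List α, w = u ++ x :: (v ++ x :: z) → y ∈ v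

namespace SeparatesOccurrences

variable {w : List α} {x y : α}

theorem of_suffix (h : w.SeparatesOccurrences x y) {v : List α} (hv : v <:+ w) :
    v.SeparatesOccurrences x y := by
  obtain ⟨t, rfl⟩ := hv
  rintro u m z rfl
  exact h (t ++ u) m z (by simp)

theorem reverse (h : w.SeparatesOccurrences x y) : w.reverse.SeparatesOccurrences x y := by
  intro u v z hw
  rw [reverse_eq_iff] at hw
  exact mem_reverse.1 (h z.reverse v.reverse u.reverse (by simp [hw]))

theorem exists_cons_suffix (h : w.SeparatesOccurrences x y) {n : ℕ}
    (hrep : replicate (n + 2) x <+ w) : ∃ v, y :: v <:+ w ∧ replicate (n + 1) x <+ v := by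
  obtain ⟨r₁, r₂, rfl, hx₁, h₂⟩ := cons_sublist_iff.1 hrep
  obtain ⟨s₁, s₂, rfl, hx₂, h₃⟩ := cons_sublist_iff.1 h₂
  obtain ⟨u, u', rfl⟩ := append_of_mem hx₁
  obtain ⟨v, v', rfl⟩ := append_of_mem hx₂
  obtain ⟨p, q, hpq⟩ := append_of_mem (h u (u' ++ v) (v' ++ s₂) (by simp))
  refine ⟨q ++ x :: (v' ++ s₂), ⟨u ++ x :: p, ?_⟩, ?_⟩
  · have := congrArg (fun t => u ++ x :: (t ++ x :: (v' ++ s₂))) hpq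
    simpa using this.symm
  · exact ((h₃.trans (sublist_append_right v' s₂)).cons_cons x).trans
      (sublist_append_right q _)

end SeparatesOccurrences

section Gaps

variable {w : List α} {x : α}

/-- The letters of `a` are placed one per gap between occurrences of `x`; `l` must then fit into
the suffix that is left. -/
theorem append_sublist_of_separatesOccurrences {a l : List α} {m : ℕ}
    (hsep : ∀ y ∈ a, w.SeparatesOccurrences x y) (hrep : replicate (a.length + m + 1) x <+ w)
    (hl : ∀ v, v <:+ w → replicate (m + 1) x <+ v → l <+ v) : a ++ l <+ w := by
  induction a generalizing w with
  | nil => simpa using hl w (suffix_refl w) (by simpa using hrep)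
  | cons y a ih =>
    have hrep' : replicate (a.length + m + 2) x <+ w := by
      rwa [show a.length + m + 2 = (y :: a).length + m + 1 by simp; omega]
    obtain ⟨v, hv, hrepv⟩ := (hsep y mem_cons_self).exists_cons_suffix hrep'
    have hvw : v <:+ w := (suffix_cons y v).trans hv
    have hav : a ++ l <+ v :=
      ih (fun z hz => (hsep z (mem_cons_of_mem y hz)).of_suffix hvw) hrepv
        (fun v' hv' => hl v' (hv'.trans hvw))
    exact (hav.cons_cons y).trans hv.sublist

theorem cons_sublist_of_separatesOccurrences {b : List α}
    (hsep : ∀ y ∈ b, w.SeparatesOccurrences x y) (hrep : replicate (b.length + 1) x <+ w) :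
    x :: b <+ w := by
  rw [← reverse_sublist, reverse_cons]
  refine append_sublist_of_separatesOccurrences (m := 0)
    (fun y hy => (hsep y (mem_reverse.1 hy)).reverse) ?_ (fun v _ hv => by simpa using hv)
  simpa using hrep.reverse

theorem append_cons_sublist_of_separatesOccurrences {a b : List α}
    (ha : ∀ y ∈ a, w.SeparatesOccurrences x y) (hb : ∀ y ∈ b, w.SeparatesOccurrences x y)
    (hrep : replicate (a.length + b.length + 1) x <+ w) : a ++ x :: b <+ w :=
  append_sublist_of_separatesOccurrences ha hrep fun _ hv hrepv =>
    cons_sublist_of_separatesOccurrences (fun y hy => (hb y hy).of_suffix hv) hrepv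

theorem Perm.sublist_of_separatesOccurrences [DecidableEq α] {S : Finset α} {l : List α}
    (hl : l.Perm (insert x S).toList) (hx : x ∉ S)
    (hsep : ∀ y ∈ S, w.SeparatesOccurrences x y)
    (hrep : replicate (S.card + 1) x <+ w) : l <+ w := by
  obtain ⟨a, b, rfl⟩ := append_of_mem (a := x) (hl.mem_iff.2 (by simp))
  have hxab : x ∉ a ++ b :=
    (nodup_cons.1 (nodup_middle.1 (hl.nodup_iff.2 (Finset.nodup_toList _)))).1
  have hS : ∀ y ∈ a ++ b, y ∈ S := by
    intro y hy
    have hyl : y ∈ a ++ x :: b := perm_middle.mem_iff.2 (mem_cons_of_mem x hy)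
    have hyx : y ≠ x := by rintro rfl; exact hxab hy
    simpa [hyx] using hl.mem_iff.1 hyl
  have hlen := hl.length_eq
  simp only [Finset.length_toList, Finset.card_insert_of_notMem hx, length_append,
    length_cons] at hlen
  refine append_cons_sublist_of_separatesOccurrences (fun y hy => hsep y (hS y (by simp [hy])))
    (fun y hy => hsep y (hS y (by simp [hy]))) ?_
  rwa [show a.length + b.length + 1 = S.card + 1 by omega]

end Gaps

end List

theorem Alternates.separatesOccurrences {α : Type*} {w : List α} {x y : α}
    (h : Alternates w x y) : w.SeparatesOccurrences x y := by
  rintro u v z rfl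
  obtain ⟨m, hum, hmv, hm⟩ := h.1 u.length (u.length + (v.length + 1)) (by omega)
    (by simp) (by simp)
  obtain ⟨d, rfl⟩ : ∃ d, m = u.length + (d + 1) := ⟨m - u.length - 1, by omega⟩
  have hd : d < v.length := by omega
  apply List.mem_of_getElem? (i := d)
  simpa [List.getElem?_append_right, List.getElem?_append_left hd] using hm

theorem Represents.separatesOccurrences {α : Type*} {G : SimpleGraph α} {w : List α}
    (hw : Represents G w) {x y : α} (h : G.Adj x y) : w.SeparatesOccurrences x y :=
  ((hw.2 x y h.ne).2 h).separatesOccurrences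

section Patterns

variable {α β : Type*} [LinearOrder α] [LinearOrder β]

theorem orderIsoWords_map {f : β → α} {τ : List β} (hf : StrictMonoOn f {b | b ∈ τ}) :
    OrderIsoWords (τ.map f) τ := by
  refine ⟨List.length_map f, fun i j a b c d ha hb hc hd => ?_⟩
  rw [List.getElem?_map, hc, Option.map_some, Option.some_inj] at ha
  rw [List.getElem?_map, hd, Option.map_some, Option.some_inj] at hb
  subst ha hb
  exact hf.lt_iff_lt (List.mem_of_getElem? hc) (List.mem_of_getElem? hd)

theorem Finset.exists_strictMonoOn_image_eq [Nonempty α] (s : Finset β) (t : Finset α)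
    (h : s.card = t.card) : ∃ f : β → α, StrictMonoOn f s ∧ s.image f = t := by
  let φ : s ≃o t := (s.orderIsoOfFin rfl).symm.trans (t.orderIsoOfFin h.symm)
  let f : β → α := fun b => if hb : b ∈ s then φ ⟨b, hb⟩ else Classical.arbitrary α
  have hf : ∀ b (hb : b ∈ s), f b = φ ⟨b, hb⟩ := fun b hb => dif_pos hb
  refine ⟨f, fun a ha b hb hab => ?_, ?_⟩
  · rw [hf a ha, hf b hb]
    exact φ.strictMono hab
  · ext y
    simp only [Finset.mem_image]
    constructor
    · rintro ⟨b, hb, rfl⟩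
      exact hf b hb ▸ (φ ⟨b, hb⟩).2
    · intro hy
      exact ⟨φ.symm ⟨y, hy⟩, (φ.symm ⟨y, hy⟩).2, by simp [hf]⟩

theorem exists_perm_toList_orderIsoWords [Nonempty α] (T : Finset α) {τ : List β}
    (hτ : τ.Nodup) (hT : τ.length = T.card) :
    ∃ l : List α, l.Perm T.toList ∧ OrderIsoWords l τ := by
  obtain ⟨f, hf, himage⟩ := Finset.exists_strictMonoOn_image_eq τ.toFinset T
    (by rw [List.toFinset_card_of_nodup hτ, hT])
  rw [List.coe_toFinset] at hf
  refine ⟨τ.map f, List.perm_of_nodup_nodup_toFinset_eq ?_ (Finset.nodup_toList T) ?_,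
    orderIsoWords_map hf⟩
  · exact hτ.map_on fun a ha b hb => hf.injOn ha hb
  · rw [Finset.toList_toFinset, ← himage]
    ext
    simp

end Patterns

theorem stmt_0_general {α β : Type*} [LinearOrder α] [Fintype α] [LinearOrder β]
    (G : SimpleGraph α) [DecidableRel G.Adj]
    (k : ℕ) (τ : List β) (hτlen : τ.length = k + 1) (hτnodup : τ.Nodup)
    (x : α) (hdeg : k ≤ G.degree x) :
    ∀ w : List α, ¬ ContainsPattern w τ → Represents G w → w.count x ≤ k := by
  intro w havoid hw
  by_contra! hcount
  obtain ⟨S, hSN, hScard⟩ :=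
    Finset.exists_subset_card_eq (s := G.neighborFinset x) (by simpa using hdeg)
  have hadj : ∀ y ∈ S, G.Adj x y := fun y hy => (G.mem_neighborFinset x y).1 (hSN hy)
  have hxS : x ∉ S := fun hx => G.loopless.irrefl x (hadj x hx)
  have : Nonempty α := ⟨x⟩
  obtain ⟨l, hl, hiso⟩ := exists_perm_toList_orderIsoWords (insert x S) hτnodup
    (by rw [Finset.card_insert_of_notMem hxS, hScard, hτlen])
  refine havoid ⟨l, hl.sublist_of_separatesOccurrences hxS
    (fun y hy => hw.separatesOccurrences (hadj y hy)) ?_, hiso⟩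
  exact List.replicate_sublist_iff.2 (by omega)

/-- If `τ` is a permutation pattern of length `k+1`, `G` is a graph that can be
represented by a `τ`-avoiding word, and `x` is a vertex of `G` of degree at least `k`, then
every `τ`-avoiding word representing `G` contains at most `k` occurrences of `x`. -/
theorem stmt_0 {α β : Type*} [LinearOrder α] [Fintype α] [LinearOrder β]
    (G : SimpleGraph α) [DecidableRel G.Adj]
    (k : ℕ) (τ : List β) (hτlen : τ.length = k + 1) (hτnodup : τ.Nodup)
    (hGrep : ∃ w₀ : List α, ¬ ContainsPattern w₀ τ ∧ Represents G w₀)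
    (x : α) (hdeg : k ≤ G.degree x) :
    ∀ w : List α, ¬ ContainsPattern w τ → Represents G w → w.count x ≤ k :=
  stmt_0_general G k τ hτlen hτnodup x hdeg
end

section
/- Let τ be a permutation pattern of length k+1 and let w be a τ-avoiding word representing a graph G. If a vertex x of G is adjacent to some vertex a of degree at least k, then the letter x occurs at most k+1 times in w. -/
/-!
Suppose `x` occurs `k + 2` times. Since `x` and `a` alternate, `a` occurs at least `k + 1`
times, and between two consecutive occurrences of `a` every neighbour of `a` occurs. Taking
`k` neighbours `b₁, …, b_k` of `a`, any arrangement `l₁ ++ a :: l₂` of `a, b₁, …, b_k` embeds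
in `w`: the letters of `l₁` go into the first `|l₁|` gaps between occurrences of `a`, then
comes an occurrence of `a`, then the letters of `l₂` go into the following gaps. Choosing the
arrangement order-isomorphic to `τ` yields an occurrence of `τ` in `w`.
-/

open List

section Alternation

variable {α : Type*}

theorem List.exists_eq_append_cons_of_replicate_succ_sublist [DecidableEq α] {a : α} {n : ℕ}
    {w : List α} (h : replicate (n + 1) a <+ w) :
    ∃ u v, w = u ++ a :: v ∧ replicate n a <+ v := by
  obtain ⟨r₁, r₂, rfl, ha, hr₂⟩ := cons_sublist_iff.1 h
  obtain ⟨u, v, rfl⟩ := append_of_mem ha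
  exact ⟨u, v ++ r₂, by simp, hr₂.trans (sublist_append_right v r₂)⟩

namespace Alternates

theorem of_append {u v : List α} {x y : α} (h : Alternates (u ++ v) x y) :
    Alternates v x y := by
  have shift : ∀ i, v[i]? = (u ++ v)[u.length + i]? := fun i => by
    rw [getElem?_append_right (by omega), Nat.add_sub_cancel_left]
  refine ⟨fun i j hij hi hj => ?_, fun i j hij hi hj => ?_⟩
  · obtain ⟨m, him, hmj, hm⟩ := h.1 (u.length + i) (u.length + j) (by omega)
      (by rwa [← shift]) (by rwa [← shift])
    exact ⟨m - u.length, by omega, by omega, by rwa [shift, Nat.add_sub_cancel' (by omega)]⟩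
  · obtain ⟨m, him, hmj, hm⟩ := h.2 (u.length + i) (u.length + j) (by omega)
      (by rwa [← shift]) (by rwa [← shift])
    exact ⟨m - u.length, by omega, by omega, by rwa [shift, Nat.add_sub_cancel' (by omega)]⟩

theorem mem_of_cons_append_cons {u v : List α} {a c : α}
    (h : Alternates (a :: (u ++ a :: v)) a c) : c ∈ u := by
  obtain ⟨m, h0m, hmu, hm⟩ := h.1 0 (u.length + 1) (by omega) rfl (by simp)
  obtain ⟨m, rfl⟩ := Nat.exists_eq_add_of_lt h0m
  rw [zero_add, getElem?_cons_succ, getElem?_append_left (by omega)] at hm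
  exact mem_of_getElem? hm

end Alternates

section Sublist

variable [DecidableEq α] {a : α}

theorem exists_eq_append_cons_append_cons_of_alternates {w : List α} {c : α} {n : ℕ}
    (halt : Alternates (a :: w) a c) (hrep : replicate (n + 1) a <+ w) :
    ∃ u₁ u₂ v, w = (u₁ ++ c :: u₂) ++ a :: v ∧ replicate n a <+ v ∧
      ∀ d, Alternates (a :: w) a d → Alternates (a :: v) a d := by
  obtain ⟨u, v, rfl, hv⟩ := exists_eq_append_cons_of_replicate_succ_sublist hrep
  obtain ⟨u₁, u₂, rfl⟩ := append_of_mem halt.mem_of_cons_append_cons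
  exact ⟨u₁, u₂, v, rfl, hv, fun d hd => hd.of_append (u := a :: (u₁ ++ c :: u₂))⟩

/- Prefixing the word with `a` records that the embedding starts just after an occurrence of `a`,
so the next letter of `l` can be placed in the gap before the following `a`. -/
theorem sublist_of_forall_alternates :
    ∀ {l w : List α}, (∀ c ∈ l, Alternates (a :: w) a c) → replicate l.length a <+ w → l <+ w
  | [], w, _, _ => nil_sublist w
  | c :: l, w, halt, hrep => by
    obtain ⟨u₁, u₂, v, rfl, hv, hsuffix⟩ :=
      exists_eq_append_cons_append_cons_of_alternates (halt c mem_cons_self) hrep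
    have hl : l <+ v :=
      sublist_of_forall_alternates (fun d hd => hsuffix d (halt d (mem_cons_of_mem c hd))) hv
    simp only [append_assoc, cons_append]
    exact ((hl.trans (sublist_cons_self a v)).trans (sublist_append_right u₂ _)).cons_cons c
      |>.trans (sublist_append_right u₁ _)

theorem append_cons_sublist_cons_of_forall_alternates :
    ∀ {l₁ l₂ w : List α}, (∀ c ∈ l₁ ++ l₂, Alternates (a :: w) a c) →
      replicate (l₁.length + l₂.length) a <+ w → l₁ ++ a :: l₂ <+ a :: w
  | [], l₂, w, halt, hrep =>
    (sublist_of_forall_alternates halt (by rwa [length_nil, zero_add] at hrep)).cons_cons a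
  | c :: l₁, l₂, w, halt, hrep => by
    rw [length_cons, Nat.add_right_comm] at hrep
    obtain ⟨u₁, u₂, v, rfl, hv, hsuffix⟩ :=
      exists_eq_append_cons_append_cons_of_alternates (halt c mem_cons_self) hrep
    have hl : l₁ ++ a :: l₂ <+ a :: v := append_cons_sublist_cons_of_forall_alternates
      (fun d hd => hsuffix d (halt d (mem_cons_of_mem c hd))) hv
    simp only [cons_append, append_assoc]
    exact ((hl.trans (sublist_append_right u₂ _)).cons_cons c).trans
      (sublist_append_right u₁ _) |>.cons a

theorem append_cons_sublist_of_forall_alternates {l₁ l₂ w : List α}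
    (halt : ∀ c ∈ l₁ ++ l₂, Alternates w a c) (hcount : l₁.length + l₂.length + 1 ≤ w.count a) :
    l₁ ++ a :: l₂ <+ w := by
  obtain ⟨u, v, rfl, hv⟩ :=
    exists_eq_append_cons_of_replicate_succ_sublist (replicate_sublist_iff.2 hcount)
  exact (append_cons_sublist_cons_of_forall_alternates (fun c hc => (halt c hc).of_append) hv).trans
    (sublist_append_right u _)

theorem Alternates.count_le_count_add_one {w : List α} {x y : α} (h : Alternates w x y) :
    w.count x ≤ w.count y + 1 := by
  rcases hn : w.count x with _ | n
  · omega
  obtain ⟨u, v, rfl, hv⟩ :=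
    exists_eq_append_cons_of_replicate_succ_sublist (replicate_sublist_iff.2 hn.ge)
  have hy : replicate n y <+ v := sublist_of_forall_alternates
    (fun c hc => eq_of_mem_replicate hc ▸ h.of_append (u := u)) (by rwa [length_replicate])
  have := replicate_sublist_iff.1
    (hy.trans ((sublist_cons_self x v).trans (sublist_append_right u _)))
  omega

end Sublist

end Alternation

theorem orderIsoWords_map_map {γ α β : Type*} [LinearOrder γ] [LinearOrder α] [LinearOrder β]
    {f : γ → α} {g : γ → β} (hf : StrictMono f) (hg : StrictMono g) (l : List γ) :
    OrderIsoWords (l.map f) (l.map g) := by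
  refine ⟨by simp, fun i j a b c d hi hj hi' hj' => ?_⟩
  simp only [getElem?_map, Option.map_eq_some_iff] at hi hj hi' hj'
  obtain ⟨p, hp, rfl⟩ := hi
  obtain ⟨q, hq, rfl⟩ := hj
  obtain ⟨p', hp', rfl⟩ := hi'
  obtain ⟨q', hq', rfl⟩ := hj'
  obtain rfl : p = p' := Option.some_inj.1 (hp.symm.trans hp')
  obtain rfl : q = q' := Option.some_inj.1 (hq.symm.trans hq')
  rw [hf.lt_iff_lt, hg.lt_iff_lt]

theorem exists_orderIsoWords_of_card_eq {α β : Type*} [LinearOrder α] [LinearOrder β]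
    (S : Finset α) (τ : List β) (hτ : τ.Nodup) (hS : S.card = τ.length) :
    ∃ s : List α, s.Nodup ∧ (∀ c, c ∈ s ↔ c ∈ S) ∧ OrderIsoWords s τ := by
  let φ : τ.toFinset ≃o S :=
    (τ.toFinset.orderIsoOfFin (toFinset_card_of_nodup hτ)).symm.trans (S.orderIsoOfFin hS)
  let f : {b // b ∈ τ} → α := fun b => φ ⟨b, mem_toFinset.2 b.2⟩
  have hf : StrictMono f := fun b b' h => φ.strictMono (show _ < _ from h)
  refine ⟨τ.attach.map f, hτ.attach.map hf.injective, fun c => ⟨?_, fun hc => ?_⟩, ?_⟩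
  · simp only [mem_map, mem_attach, true_and, forall_exists_index]
    rintro b rfl
    exact (φ _).2
  · obtain ⟨b, hb⟩ := φ.surjective ⟨c, hc⟩
    exact mem_map.2 ⟨⟨b, mem_toFinset.1 b.2⟩, mem_attach _ _, congrArg Subtype.val hb⟩
  · simpa using orderIsoWords_map_map hf (Subtype.strictMono_coe _) τ.attach

/-- If `τ` is a permutation pattern of length `k+1`, `w` is a `τ`-avoiding word
representing a graph `G`, and the vertex `x` is adjacent to some vertex `a` of degree at
least `k`, then the letter `x` occurs at most `k+1` times in `w`. -/
theorem stmt_1 {α β : Type*} [LinearOrder α] [Fintype α] [LinearOrder β]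
    (G : SimpleGraph α) [DecidableRel G.Adj]
    (k : ℕ) (τ : List β) (hτlen : τ.length = k + 1) (hτnodup : τ.Nodup)
    (w : List α) (hw : ¬ ContainsPattern w τ) (hrep : Represents G w)
    (x a : α) (hadj : G.Adj x a) (hdeg : k ≤ G.degree a) :
    w.count x ≤ k + 1 := by
  by_contra! hcount
  have hcount_a : k + 1 ≤ w.count a := by
    have := ((hrep.2 x a (G.ne_of_adj hadj)).2 hadj).count_le_count_add_one
    omega
  obtain ⟨B, hB, hBcard⟩ := Finset.exists_subset_card_eq (s := G.neighborFinset a) (n := k)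
    (by rwa [G.card_neighborFinset_eq_degree])
  have haB : a ∉ B := fun h => G.ne_of_adj ((G.mem_neighborFinset a a).1 (hB h)) rfl
  obtain ⟨s, hsnodup, hsmem, hsτ⟩ := exists_orderIsoWords_of_card_eq (insert a B) τ hτnodup
    (by rw [Finset.card_insert_of_notMem haB, hBcard, hτlen])
  obtain ⟨l₁, l₂, rfl⟩ := append_of_mem ((hsmem a).2 (Finset.mem_insert_self a B))
  refine hw ⟨_, append_cons_sublist_of_forall_alternates (fun c hc => ?_) ?_, hsτ⟩
  · have hca : c ≠ a := fun h => (nodup_middle.1 hsnodup).notMem (h ▸ hc)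
    have hcs : c ∈ l₁ ++ a :: l₂ := by simp only [mem_append, mem_cons] at hc ⊢; tauto
    have hcB : c ∈ B := (Finset.mem_insert.1 ((hsmem c).1 hcs)).resolve_left hca
    exact (hrep.2 a c hca.symm).2 ((G.mem_neighborFinset a c).1 (hB hcB))
  · have := hsτ.1
    simp only [length_append, length_cons] at this
    omega
end

section
/- If a finite graph G is 123-representable, then there exists a 123-avoiding word w representing G (after a suitable relabeling of the vertices) in which every letter appears at most twice. -/
/-!
In a 123-avoiding word, a letter `x` occurring at least three times alternates with at most one
other letter: if it alternated with `y < z`, a `y` between the first two copies of `x` and a `z`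
between the last two would form an increasing triple with one of the copies of `x`. Such an `x`
can be rewritten: delete all its copies and put a block at one position. If `x` alternates with
no letter, the block is `x x` at a former `x`; if it alternates with `y`, it is `x y x` in place
of a `y` when `y` occurs twice, and `x y x y` in place of a `y` when `y` occurs three times or
more (the other copies of `y` are then deleted too). Restricted to `x` and any letter other than
`y`, the new word has two adjacent copies of `x`, and restrictions to pairs of other letters do
not change, so the same pairs alternate. For `x < y` the block replaces a `y` preceded by an `x`
and followed by `x … y`; then every increasing triple of the new word yields one of the old
word. The case `y < x` follows by reversing both the word and the order. Each step shortens
the word.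
-/

namespace List

variable {α : Type*}

theorem cons_sublist_drop_of_getElem? {w l : List α} {a : α} {i j : ℕ} (hji : j ≤ i)
    (hi : w[i]? = some a) (hl : l <+ w.drop (i + 1)) : a :: l <+ w.drop j := by
  have hdrop : w.drop i = a :: w.drop (i + 1) := by
    rw [drop_eq_getElem_cons (getElem?_eq_some_iff.mp hi).1, (getElem?_eq_some_iff.mp hi).2]
  have : w.drop j = (w.drop j).take (i - j) ++ w.drop i := by
    conv_lhs => rw [← take_append_drop (i - j) (w.drop j)]
    rw [drop_drop]
    congr 2
    omega
  rw [this, hdrop]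
  exact (hl.cons_cons a).trans (sublist_append_right _ _)

theorem triple_sublist_of_getElem? {w : List α} {a b c : α} {i j k : ℕ} (hij : i < j)
    (hjk : j < k) (hi : w[i]? = some a) (hj : w[j]? = some b) (hk : w[k]? = some c) :
    [a, b, c] <+ w := by
  simpa using cons_sublist_drop_of_getElem? (Nat.zero_le i) hi
    (cons_sublist_drop_of_getElem? hij hj
      (cons_sublist_drop_of_getElem? hjk hk (nil_sublist _)))

theorem exists_getElem?_of_triple_sublist {w : List α} {a b c : α} (h : [a, b, c] <+ w) :
    ∃ i j k : ℕ, i < j ∧ j < k ∧ w[i]? = some a ∧ w[j]? = some b ∧ w[k]? = some c := by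
  obtain ⟨f, hf⟩ := sublist_iff_exists_orderEmbedding_getElem?_eq.mp h
  refine ⟨f 0, f 1, f 2, f.strictMono (by norm_num), f.strictMono (by norm_num), ?_, ?_, ?_⟩
  · simpa using (hf 0).symm
  · simpa using (hf 1).symm
  · simpa using (hf 2).symm

theorem exists_getElem?_of_three_le_count [BEq α] [LawfulBEq α] {w : List α} {x : α}
    (hx : 3 ≤ w.count x) : ∃ i j k : ℕ, i < j ∧ j < k ∧
      w[i]? = some x ∧ w[j]? = some x ∧ w[k]? = some x :=
  exists_getElem?_of_triple_sublist (replicate_sublist_iff.mpr hx)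

theorem Sublist.pair_replace_left_or_right {x y c : α} {B : List α} (h : [x, y] <+ B)
    (hc : c ∈ B) :
    [c, y] <+ B ∨ [x, c] <+ B := by
  obtain ⟨r₁, r₂, rfl, hx, hy⟩ := cons_sublist_iff.mp h
  rcases mem_append.mp hc with hc | hc
  · exact Or.inl ((singleton_sublist.2 hc).append hy)
  · exact Or.inr ((singleton_sublist.2 hx).append (singleton_sublist.2 hc))

theorem exists_eq_append_cons_of_cons_cons_sublist {x y : α} {l w : List α}
    (h : x :: y :: l <+ w) : ∃ A B, w = A ++ y :: B ∧ x ∈ A ∧ l <+ B := by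
  obtain ⟨r₁, r₂, rfl, hx, h'⟩ := cons_sublist_iff.mp h
  obtain ⟨s₁, s₂, rfl, hy, hl⟩ := cons_sublist_iff.mp h'
  obtain ⟨t₁, t₂, rfl⟩ := append_of_mem hy
  exact ⟨r₁ ++ t₁, t₂ ++ s₂, by simp, mem_append_left _ hx, hl.trans (sublist_append_right _ _)⟩

theorem forall_exists_between_iff {w : List α} {x y : α} :
    (∀ i j : ℕ, i < j → w[i]? = some x → w[j]? = some x →
      ∃ k : ℕ, i < k ∧ k < j ∧ w[k]? = some y) ↔
    ∀ s m r, w = s ++ x :: m ++ x :: r → y ∈ m := by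
  constructor
  · rintro h s m r rfl
    have hlen : (s ++ x :: m).length = s.length + 1 + m.length := by simp; omega
    obtain ⟨k, hik, hkj, hk⟩ := h s.length (s ++ x :: m).length (by omega)
      (by simp) (by rw [getElem?_append_right le_rfl, Nat.sub_self]; rfl)
    have hkm : (s ++ x :: m ++ x :: r)[k]? = m[k - (s.length + 1)]? := by
      rw [getElem?_append_left (by omega), getElem?_append_right (by omega),
        show k - s.length = (k - (s.length + 1)) + 1 by omega, getElem?_cons_succ]
    exact mem_of_getElem? (hkm ▸ hk)
  · intro h i j hij hi hj
    by_contra! hno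
    have hdi : w.drop i = x :: w.drop (i + 1) := by
      rw [drop_eq_getElem_cons (getElem?_eq_some_iff.mp hi).1, (getElem?_eq_some_iff.mp hi).2]
    have hdj : w.drop j = x :: w.drop (j + 1) := by
      rw [drop_eq_getElem_cons (getElem?_eq_some_iff.mp hj).1, (getElem?_eq_some_iff.mp hj).2]
    set m := (w.drop (i + 1)).take (j - (i + 1))
    have hsplit : w = w.take i ++ x :: m ++ x :: w.drop (j + 1) := by
      have hm : w.drop (i + 1) = m ++ w.drop j := by
        rw [← take_append_drop (j - (i + 1)) (w.drop (i + 1)), drop_drop,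
          Nat.add_sub_cancel' (by omega)]
      rw [← hdj, append_assoc, cons_append, ← hm, ← hdi, take_append_drop]
    obtain ⟨n, hn⟩ := mem_iff_getElem?.mp (h _ _ _ hsplit)
    have hnlt : n < j - (i + 1) := by
      by_contra hge
      simp [m, hge] at hn
    rw [getElem?_take, if_pos hnlt, getElem?_drop] at hn
    exact hno (i + 1 + n) (by omega) (by omega) hn

variable [DecidableEq α]

def restrict (w : List α) (x y : α) : List α := w.filter fun c => c = x ∨ c = y

theorem restrict_comm (w : List α) (x y : α) : w.restrict y x = w.restrict x y :=
  filter_congr fun c _ => by simp [or_comm]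

@[simp]
theorem restrict_append (w₁ w₂ : List α) (x y : α) :
    (w₁ ++ w₂).restrict x y = w₁.restrict x y ++ w₂.restrict x y :=
  filter_append ..

theorem restrict_filter {p : α → Bool} {a b : α} (ha : p a) (hb : p b) (l : List α) :
    (l.filter p).restrict a b = l.restrict a b := by
  simp only [restrict, filter_filter]
  exact filter_congr fun c _ => by by_cases hc : c = a ∨ c = b <;> aesop

theorem restrict_filter_ne {x y : α} (hxy : x ≠ y) (l : List α) :
    (l.filter fun c => c ≠ x).restrict x y = replicate (l.count y) y := by
  rw [← filter_beq, restrict, filter_filter]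
  refine filter_congr fun c _ => ?_
  by_cases hc : c = y
  · simp [hc, Ne.symm hxy]
  · by_cases hcx : c = x <;> simp [hc, hcx, hxy]

theorem forall_mem_between_iff_not_infix {w : List α} {x y : α} :
    (∀ s m r, w = s ++ x :: m ++ x :: r → y ∈ m) ↔ ¬ [x, x] <:+: w.restrict x y := by
  constructor
  · rintro h ⟨s', t', hst⟩
    simp only [append_assoc, cons_append, nil_append] at hst
    obtain ⟨s, t, rfl, -, ht⟩ := filter_eq_append_iff.mp hst.symm
    obtain ⟨t₁, t₂, rfl, -, -, ht₂⟩ := filter_eq_cons_iff.mp ht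
    obtain ⟨m, r, rfl, hm, -, -⟩ := filter_eq_cons_iff.mp ht₂
    exact hm y (h (s ++ t₁) m r (by simp)) (by simp)
  · rintro h s m r rfl
    by_contra hy
    have hw : (s ++ x :: m ++ x :: r).restrict x y =
        s.restrict x y ++ x :: (m.restrict x y ++ x :: r.restrict x y) := by
      simp [restrict]
    rcases hm : m.restrict x y with _ | ⟨c, t⟩
    · exact h ⟨s.restrict x y, r.restrict x y, by rw [hw, hm]; simp⟩
    · have hc : c = x := by
        have hc : c ∈ m.restrict x y := hm ▸ mem_cons_self
        simp only [restrict, mem_filter, decide_eq_true_eq] at hc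
        exact hc.2.resolve_right (by rintro rfl; exact hy hc.1)
      exact h ⟨s.restrict x y, t ++ x :: r.restrict x y, by rw [hw, hm, hc]; simp⟩

theorem isChain_ne_restrict_iff {w : List α} {x y : α} :
    (w.restrict x y).IsChain (· ≠ ·) ↔
      ¬ [x, x] <:+: w.restrict x y ∧ ¬ [y, y] <:+: w.restrict x y := by
  constructor
  · intro h
    exact ⟨fun hx => by simpa using h.infix hx, fun hy => by simpa using h.infix hy⟩
  · rintro ⟨hx, hy⟩
    refine isChain_iff_forall_rel_of_append_cons_cons.mpr fun a b l₁ l₂ hl hab => ?_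
    subst hab
    have ha : a ∈ w.restrict x y := by simp [hl]
    simp only [restrict, mem_filter, decide_eq_true_eq] at ha
    rcases ha.2 with rfl | rfl
    · exact hx ⟨l₁, l₂, by simp [hl]⟩
    · exact hy ⟨l₁, l₂, by simp [hl]⟩

theorem length_filter_ne_add_count (l : List α) (a : α) :
    (l.filter fun c => c ≠ a).length + l.count a = l.length := by
  rw [length_eq_length_filter_add (fun c => decide (c ≠ a)) (l := l), count_eq_length_filter]
  congr 2
  refine filter_congr fun c _ => ?_
  simp only [ne_eq, decide_not, Bool.not_not]
  rfl

theorem length_filter_ne_ne_add_count {x y : α} (hxy : x ≠ y) (l : List α) :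
    (l.filter fun c => c ≠ x ∧ c ≠ y).length + l.count x + l.count y = l.length := by
  have hx := length_filter_ne_add_count l x
  have hy := length_filter_ne_add_count (l.filter (· ≠ x)) y
  rw [count_filter (by simpa using hxy.symm), filter_filter] at hy
  have : (l.filter fun c => c ≠ x ∧ c ≠ y) = l.filter fun c => c ≠ y && c ≠ x :=
    filter_congr fun c _ => by simp [Bool.and_comm]
  rw [this]
  omega

end List

open List

section Alternation

variable {α : Type*}

theorem alternates_comm {w : List α} {a b : α} : Alternates w a b ↔ Alternates w b a :=
  And.comm

theorem Alternates.four_sublist_of_three_le_count [BEq α] [LawfulBEq α] {w : List α} {x y : α}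
    (hy : Alternates w x y) (hx : 3 ≤ w.count x) : [x, y, x, y] <+ w := by
  obtain ⟨p₁, p₂, p₃, h12, h23, h₁, h₂, h₃⟩ := exists_getElem?_of_three_le_count hx
  obtain ⟨k₁, hk₁, hk₁', hy₁⟩ := hy.1 p₁ p₂ h12 h₁ h₂
  obtain ⟨k₂, hk₂, -, hy₂⟩ := hy.1 p₂ p₃ h23 h₂ h₃
  simpa using cons_sublist_drop_of_getElem? (Nat.zero_le _) h₁
    (cons_sublist_drop_of_getElem? hk₁ hy₁ (cons_sublist_drop_of_getElem? hk₁' h₂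
      (cons_sublist_drop_of_getElem? hk₂ hy₂ (nil_sublist _))))

variable [DecidableEq α]

theorem alternates_iff_isChain_restrict {w : List α} {x y : α} :
    Alternates w x y ↔ (w.restrict x y).IsChain (· ≠ ·) := by
  rw [isChain_ne_restrict_iff, Alternates, forall_exists_between_iff, forall_exists_between_iff,
    forall_mem_between_iff_not_infix, forall_mem_between_iff_not_infix, restrict_comm]

theorem alternates_congr {w w' : List α} {a b : α} (h : w.restrict a b = w'.restrict a b) :
    Alternates w a b ↔ Alternates w' a b := by
  rw [alternates_iff_isChain_restrict, alternates_iff_isChain_restrict, h]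

theorem not_alternates_of_infix {w : List α} {a b : α} (h : [a, a] <:+: w.restrict a b) :
    ¬ Alternates w a b := fun hw => by
  simpa using (alternates_iff_isChain_restrict.mp hw).infix h

theorem alternates_filter_append_iff {p : α → Bool} {A B u : List α} {m a b : α} (ha : p a)
    (hb : p b) (hu : u.restrict a b = [m].restrict a b) :
    Alternates (A.filter p ++ u ++ B.filter p) a b ↔ Alternates (A ++ m :: B) a b := by
  apply alternates_congr
  rw [← singleton_append]
  simp only [restrict_append, restrict_filter ha hb, hu, append_assoc]

theorem not_alternates_append_of_infix {A B u : List α} {a b : α}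
    (hu : [a, a] <:+: u.restrict a b) : ¬ Alternates (A ++ u ++ B) a b :=
  not_alternates_of_infix (by simpa only [restrict_append] using hu.trans (infix_append _ _ _))

end Alternation

def AlternationEquiv {α : Type*} (w w' : List α) : Prop :=
  (∀ c, c ∈ w' ↔ c ∈ w) ∧ ∀ a ∈ w, ∀ b ∈ w, a ≠ b → (Alternates w' a b ↔ Alternates w a b)

theorem AlternationEquiv.refl {α : Type*} (w : List α) : AlternationEquiv w w :=
  ⟨fun _ => Iff.rfl, fun _ _ _ _ _ => Iff.rfl⟩

theorem AlternationEquiv.trans {α : Type*} {w₁ w₂ w₃ : List α} (h₁₂ : AlternationEquiv w₁ w₂)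
    (h₂₃ : AlternationEquiv w₂ w₃) : AlternationEquiv w₁ w₃ :=
  ⟨fun c => (h₂₃.1 c).trans (h₁₂.1 c), fun a ha b hb hab =>
    (h₂₃.2 a ((h₁₂.1 a).2 ha) b ((h₁₂.1 b).2 hb) hab).trans (h₁₂.2 a ha b hb hab)⟩

theorem RepresentsLab.of_alternationEquiv {V L : Type*} {G : SimpleGraph V} {f : V → L}
    {w w' : List L} (hf : Function.Injective f) (h : RepresentsLab G f w)
    (e : AlternationEquiv w w') : RepresentsLab G f w' :=
  ⟨fun l hl => h.1 l ((e.1 l).1 hl), fun v => (e.1 _).2 (h.2.1 v), fun x y hxy =>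
    (e.2 _ (h.2.1 x) _ (h.2.1 y) (hf.ne hxy)).trans (h.2.2 x y hxy)⟩

section Avoids123

variable {α : Type*} [LinearOrder α]

theorem avoids123_iff_sublist {w : List α} :
    Avoids123 w ↔ ∀ a b c, [a, b, c] <+ w → ¬ (a < b ∧ b < c) := by
  constructor
  · rintro hw a b c hs ⟨hab, hbc⟩
    obtain ⟨i, j, k, hij, hjk, hi, hj, hk⟩ := exists_getElem?_of_triple_sublist hs
    exact hw ⟨i, j, k, a, b, c, hij, hjk, hi, hj, hk, hab, hbc⟩
  · rintro hw ⟨i, j, k, a, b, c, hij, hjk, hi, hj, hk, hab, hbc⟩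
    exact hw a b c (triple_sublist_of_getElem? hij hjk hi hj hk) ⟨hab, hbc⟩

theorem Avoids123.sublist {w w' : List α} (hw : Avoids123 w) (h : w' <+ w) : Avoids123 w' := by
  rw [avoids123_iff_sublist] at hw ⊢
  exact fun a b c hs => hw a b c (hs.trans h)

theorem Avoids123.replace_block_of_subset {A B u v : List α} (hw : Avoids123 (A ++ v ++ B))
    (hv : v.Pairwise (· < ·)) (hu : u ⊆ v) : Avoids123 (A ++ u ++ B) := by
  rw [avoids123_iff_sublist] at hw ⊢
  rintro a b c h ⟨hab, hbc⟩
  obtain ⟨l, r, hlr, hl, hr⟩ := sublist_append_iff.mp h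
  obtain ⟨l₁, l₂, rfl, hl₁, hl₂⟩ := sublist_append_iff.mp hl
  have hinc : l₂.Pairwise (· < ·) := by
    have : [a, b, c].Pairwise (· < ·) := by simp [hab, hbc, hab.trans hbc]
    exact this.sublist (hlr ▸ (sublist_append_right l₁ l₂).trans (sublist_append_left _ r))
  have hl₂v : l₂ <+ v := sublist_of_subperm_of_pairwise
    (subperm_of_subset hinc.nodup fun _ hz => hu (hl₂.subset hz)) hinc hv
  exact hw a b c (hlr ▸ (hl₁.append hl₂v).append hr) ⟨hab, hbc⟩

theorem Avoids123.insert_before {A B : List α} {x y : α} (hw : Avoids123 (A ++ y :: B))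
    (hxy : x < y) (hxA : x ∈ A) (hB : [x, y] <+ B) : Avoids123 (A ++ [x, y] ++ B) := by
  rw [avoids123_iff_sublist] at hw ⊢
  have hx : [x] <+ A := singleton_sublist.2 hxA
  rintro a b c h ⟨hab, hbc⟩
  rw [append_assoc, cons_append, cons_append, nil_append] at h
  obtain ⟨l₁, l₂, hl, hl₁, hl₂⟩ := sublist_append_iff.mp h
  rcases sublist_cons_iff.mp hl₂ with hl₂ | ⟨r, rfl, hr⟩
  · exact hw a b c (hl ▸ hl₁.append hl₂) ⟨hab, hbc⟩
  match l₁, hl₁ with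
  | [], _ =>
    simp only [nil_append, cons.injEq] at hl
    obtain ⟨rfl, rfl⟩ := hl
    exact hw a b c (hx.append hr) ⟨hab, hbc⟩
  | [a'], hl₁ =>
    simp only [cons_append, nil_append, cons.injEq] at hl
    obtain ⟨rfl, hbx, rfl⟩ := hl
    rw [hbx] at hab hbc
    rcases mem_cons.mp (singleton_sublist.mp hr) with rfl | hcB
    · exact hw a x c (hl₁.append (hB.cons c)) ⟨hab, hbc⟩
    rcases lt_trichotomy c y with hcy | rfl | hyc
    · rcases hB.pair_replace_left_or_right hcB with hcy' | hxc
      · exact hw a c y (hl₁.append (hcy'.cons y)) ⟨hab.trans hbc, hcy⟩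
      · exact hw a x c (hl₁.append (hxc.cons y)) ⟨hab, hbc⟩
    · exact hw a x c (hl₁.append (hB.cons c)) ⟨hab, hbc⟩
    · exact hw x y c (hx.append ((singleton_sublist.mpr hcB).cons_cons y)) ⟨hxy, hyc⟩
  | [a', b'], hl₁ =>
    simp only [cons_append, nil_append, cons.injEq] at hl
    obtain ⟨rfl, rfl, hcx, rfl⟩ := hl
    rw [hcx] at hbc
    exact hw a b x (hl₁.append ((singleton_sublist.mpr (hB.subset (by simp))).cons y))
      ⟨hab, hbc⟩
  | _ :: _ :: _ :: _, _ => simp at hl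

theorem Avoids123.eq_of_alternates {w : List α} {x y z : α} (hw : Avoids123 w)
    (hx : 3 ≤ w.count x) (hxy : x ≠ y) (hxz : x ≠ z) (hy : Alternates w x y)
    (hz : Alternates w x z) : y = z := by
  by_contra hyz
  wlog hlt : y < z generalizing y z
  · exact this hxz hxy hz hy (Ne.symm hyz) ((Ne.symm hyz).lt_of_le (not_lt.mp hlt))
  obtain ⟨p₁, p₂, p₃, h12, h23, h₁, h₂, h₃⟩ := exists_getElem?_of_three_le_count hx
  obtain ⟨k, hk, hk', hy₁⟩ := hy.1 p₁ p₂ h12 h₁ h₂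
  obtain ⟨l, hl, hl', hz₂⟩ := hz.1 p₂ p₃ h23 h₂ h₃
  apply hw
  rcases lt_or_gt_of_ne hxy with hxy | hyx
  · exact ⟨p₁, k, l, x, y, z, hk, by omega, h₁, hy₁, hz₂, hxy, hlt⟩
  rcases lt_or_gt_of_ne hxz with hxz | hzx
  · exact ⟨k, p₂, l, y, x, z, hk', hl, hy₁, h₂, hz₂, hyx, hxz⟩
  · exact ⟨k, l, p₃, y, z, x, by omega, hl', hy₁, hz₂, h₃, hlt, hzx⟩

end Avoids123

section Duality

open OrderDual

variable {α : Type*} [LinearOrder α] {w w' : List α}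

theorem avoids123_reverse_map_toDual : Avoids123 (w.map toDual).reverse ↔ Avoids123 w := by
  rw [avoids123_iff_sublist, avoids123_iff_sublist]
  constructor
  · rintro h a b c hs ⟨hab, hbc⟩
    refine h (toDual c) (toDual b) (toDual a) ?_
      ⟨toDual_lt_toDual.mpr hbc, toDual_lt_toDual.mpr hab⟩
    simpa using reverse_sublist.mpr (hs.map toDual)
  · rintro h a b c hs ⟨hab, hbc⟩
    refine h (ofDual c) (ofDual b) (ofDual a) ?_ ⟨hbc, hab⟩
    simpa [Function.comp_def] using (reverse_sublist.mpr hs).map ofDual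

theorem alternates_reverse_map_toDual {a b : α} :
    Alternates (w.map toDual).reverse (toDual a) (toDual b) ↔ Alternates w a b := by
  rw [alternates_iff_isChain_restrict, alternates_iff_isChain_restrict]
  have : ((w.map toDual).reverse).restrict (toDual a) (toDual b) =
      ((w.restrict a b).map toDual).reverse := by
    simp [restrict, filter_reverse, filter_map, Function.comp_def]
  rw [this, isChain_reverse, isChain_map]
  exact ⟨fun h => h.imp fun _ _ hne heq => hne (by simp [heq]),
    fun h => h.imp fun _ _ hne heq => hne (by simpa using heq.symm)⟩

theorem AlternationEquiv.of_reverse_map_toDual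
    (h : AlternationEquiv (w.map toDual).reverse (w'.map toDual).reverse) :
    AlternationEquiv w w' := by
  refine ⟨fun c => by simpa using h.1 (toDual c), fun a ha b hb hab => ?_⟩
  rw [← alternates_reverse_map_toDual, ← alternates_reverse_map_toDual (w := w)]
  exact h.2 _ (by simpa using ha) _ (by simpa using hb) (by simpa using hab)

end Duality

section Surgery

variable {α : Type*} [LinearOrder α] {w : List α} {x y : α}

theorem Avoids123.exists_shorter_of_isolated (hw : Avoids123 w) (hx : 3 ≤ w.count x)
    (hiso : ∀ z ∈ w, z ≠ x → ¬ Alternates w x z) :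
    ∃ w', Avoids123 w' ∧ AlternationEquiv w w' ∧ w'.length < w.length := by
  obtain ⟨A, B, rfl⟩ := append_of_mem (count_pos_iff.mp (by omega : 0 < w.count x))
  refine ⟨A.filter (· ≠ x) ++ [x, x] ++ B.filter (· ≠ x), ?_,
    ⟨fun c => ?_, fun a ha b hb hab => ?_⟩, ?_⟩
  · have hw' : Avoids123 (A ++ [x] ++ B) := by simpa using hw
    exact (hw'.replace_block_of_subset (by simp) (by simp)).sublist
      ((filter_sublist.append (Sublist.refl _)).append filter_sublist)
  · by_cases hc : c = x <;> simp [hc]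
  · wlog hbx : b ≠ x generalizing a b
    · rw [alternates_comm, alternates_comm (w := A ++ x :: B)]
      exact this b hb a ha hab.symm (by rwa [not_not.mp hbx] at hab)
    by_cases hax : a = x
    · rw [hax]
      exact iff_of_false (not_alternates_append_of_infix (by simp [restrict, Ne.symm hbx]))
        (hiso b hb hbx)
    · exact alternates_filter_append_iff (by simpa) (by simpa)
        (by simp [restrict, Ne.symm hax, Ne.symm hbx])
  · have hA := length_filter_ne_add_count A x
    have hB := length_filter_ne_add_count B x
    simp only [count_append, count_cons_self] at hx
    simp only [length_append, length_cons, length_nil]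
    omega

theorem Avoids123.exists_shorter_of_pendant (hw : Avoids123 w) (hxy : x < y)
    (hx : 3 ≤ w.count x) (hy2 : w.count y ≤ 2) (hy : Alternates w x y)
    (huniq : ∀ z, z ≠ x → Alternates w x z → z = y) :
    ∃ w', Avoids123 w' ∧ AlternationEquiv w w' ∧ w'.length < w.length := by
  obtain ⟨A, B, rfl, hxA, hB⟩ :=
    exists_eq_append_cons_of_cons_cons_sublist (hy.four_sublist_of_three_le_count hx)
  have hyx : y ≠ x := hxy.ne'
  have hyB : 0 < B.count y := count_pos_iff.mpr (hB.subset (by simp))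
  have hcount : A.count y = 0 ∧ B.count y = 1 := by
    simp only [count_append, count_cons_self] at hy2; omega
  refine ⟨A.filter (· ≠ x) ++ [x, y, x] ++ B.filter (· ≠ x), ?_,
    ⟨fun c => ?_, fun a ha b hb hab => ?_⟩, ?_⟩
  · exact ((hw.insert_before hxy hxA hB).replace_block_of_subset (by simp [hxy])
      (by simp)).sublist ((filter_sublist.append (Sublist.refl _)).append filter_sublist)
  · by_cases hc : c = x <;> simp [hc, hxA]
  · wlog hbx : b ≠ x generalizing a b
    · rw [alternates_comm, alternates_comm (w := A ++ y :: B)]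
      exact this b hb a ha hab.symm (by rwa [not_not.mp hbx] at hab)
    by_cases hax : a = x
    · rw [hax]
      by_cases hby : b = y
      · rw [hby]
        refine iff_of_true ?_ hy
        rw [alternates_iff_isChain_restrict]
        simp only [restrict_append, restrict_filter_ne hxy.ne, hcount.1, hcount.2]
        simp [restrict, hxy.ne, hyx]
      · refine iff_of_false (not_alternates_append_of_infix ?_) fun h => hby (huniq b hbx h)
        simp [restrict, hyx, Ne.symm hby]
    · exact alternates_filter_append_iff (by simpa) (by simpa)
        (by simp [restrict, filter_cons, Ne.symm hax, Ne.symm hbx])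
  · have hA := length_filter_ne_add_count A x
    have hB := length_filter_ne_add_count B x
    rw [count_append, count_cons_of_ne hyx] at hx
    simp only [length_append, length_cons, length_nil]
    omega

theorem Avoids123.exists_shorter_of_pair (hw : Avoids123 w) (hxy : x < y)
    (hx : 3 ≤ w.count x) (hy3 : 3 ≤ w.count y) (hy : Alternates w x y)
    (huniqx : ∀ z, z ≠ x → Alternates w x z → z = y)
    (huniqy : ∀ z, z ≠ y → Alternates w y z → z = x) :
    ∃ w', Avoids123 w' ∧ AlternationEquiv w w' ∧ w'.length < w.length := by
  obtain ⟨A, B, rfl, hxA, hB⟩ :=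
    exists_eq_append_cons_of_cons_cons_sublist (hy.four_sublist_of_three_le_count hx)
  have hyx : y ≠ x := hxy.ne'
  set w' := A.filter (fun c => c ≠ x ∧ c ≠ y) ++ [x, y, x, y] ++
    B.filter (fun c => c ≠ x ∧ c ≠ y) with hw'
  have hnil : ∀ l : List α, (l.filter fun c => c ≠ x ∧ c ≠ y).restrict x y = [] := fun l => by
    simp only [restrict, filter_filter, filter_eq_nil_iff]
    intro c _
    by_cases hcx : c = x <;> simp [hcx]
  have hw'xy : Alternates w' x y := by
    rw [alternates_iff_isChain_restrict, hw']
    simp only [restrict_append, hnil]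
    simp [restrict, hxy.ne, hyx]
  have hsep : ∀ s b, (s = x ∨ s = y) → b ≠ x → b ≠ y →
      ¬ Alternates w' s b ∧ ¬ Alternates (A ++ y :: B) s b := by
    rintro s b (rfl | rfl) hbx hby
    · refine ⟨not_alternates_append_of_infix ?_, fun h => hby (huniqx b hbx h)⟩
      simp [restrict, hyx, Ne.symm hbx, Ne.symm hby]
    · refine ⟨not_alternates_append_of_infix ?_, fun h => hbx (huniqy b hby h)⟩
      simp [restrict, hxy.ne, Ne.symm hbx, Ne.symm hby]
  refine ⟨w', ?_, ⟨fun c => ?_, fun a ha b hb hab => ?_⟩, ?_⟩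
  · exact ((hw.insert_before hxy hxA hB).replace_block_of_subset (by simp [hxy])
      (by simp)).sublist ((filter_sublist.append (Sublist.refl _)).append filter_sublist)
  · by_cases hcx : c = x
    · simp [hw', hcx, hxA]
    · by_cases hcy : c = y <;> simp [hw', hcx, hcy]
  · by_cases has : a = x ∨ a = y <;> by_cases hbs : b = x ∨ b = y
    · rcases has with rfl | rfl <;> rcases hbs with rfl | rfl <;>
        simp only [ne_eq, not_true_eq_false] at hab
      · exact iff_of_true hw'xy hy
      · exact iff_of_true (alternates_comm.mp hw'xy) (alternates_comm.mp hy)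
    · simp only [not_or] at hbs
      exact iff_of_false (hsep a b has hbs.1 hbs.2).1 (hsep a b has hbs.1 hbs.2).2
    · simp only [not_or] at has
      rw [alternates_comm, alternates_comm (w := A ++ y :: B)]
      exact iff_of_false (hsep b a hbs has.1 has.2).1 (hsep b a hbs has.1 has.2).2
    · simp only [not_or] at has hbs
      exact alternates_filter_append_iff (by simpa using has) (by simpa using hbs)
        (by simp [restrict, Ne.symm has.1, Ne.symm has.2, Ne.symm hbs.1, Ne.symm hbs.2])
  · have hA := length_filter_ne_ne_add_count hxy.ne A
    have hB := length_filter_ne_ne_add_count hxy.ne B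
    rw [count_append, count_cons_of_ne hyx] at hx
    rw [count_append, count_cons_self] at hy3
    simp only [hw', length_append, length_cons, length_nil]
    omega

end Surgery

section Reduction

open OrderDual

variable {α : Type*} [LinearOrder α] {w : List α} {x : α}

theorem Avoids123.exists_shorter_of_lt {y : α} (hw : Avoids123 w) (hxy : x < y)
    (hx : 3 ≤ w.count x) (hy : Alternates w x y) :
    ∃ w', Avoids123 w' ∧ AlternationEquiv w w' ∧ w'.length < w.length := by
  have huniqx : ∀ z, z ≠ x → Alternates w x z → z = y := fun z hzx hz =>
    (hw.eq_of_alternates hx hxy.ne (Ne.symm hzx) hy hz).symm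
  by_cases hy3 : 3 ≤ w.count y
  · exact hw.exists_shorter_of_pair hxy hx hy3 hy huniqx fun z hzy hz =>
      (hw.eq_of_alternates hy3 hxy.ne' (Ne.symm hzy) (alternates_comm.mp hy) hz).symm
  · exact hw.exists_shorter_of_pendant hxy hx (by omega) hy huniqx

theorem Avoids123.exists_shorter (hw : Avoids123 w) (hx : 3 ≤ w.count x) :
    ∃ w', Avoids123 w' ∧ AlternationEquiv w w' ∧ w'.length < w.length := by
  by_cases hiso : ∃ y ∈ w, y ≠ x ∧ Alternates w x y
  · obtain ⟨y, -, hyx, hy⟩ := hiso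
    rcases lt_or_gt_of_ne hyx with hlt | hlt
    · obtain ⟨w'', hw'', e, hlen⟩ := (avoids123_reverse_map_toDual.mpr hw).exists_shorter_of_lt
        (toDual_lt_toDual.mpr hlt)
        (by rwa [count_reverse, count_map_of_injective _ _ toDual.injective])
        (alternates_reverse_map_toDual.mpr hy)
      have hdual : ((w''.map ofDual).reverse.map toDual).reverse = w'' := by
        simp [Function.comp_def]
      refine ⟨(w''.map ofDual).reverse, avoids123_reverse_map_toDual.mp (by rwa [hdual]),
        .of_reverse_map_toDual (by rwa [hdual]), by simpa using hlen⟩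
    · exact hw.exists_shorter_of_lt hlt hx hy
  · push Not at hiso
    exact hw.exists_shorter_of_isolated hx hiso

theorem Avoids123.exists_alternationEquiv_count_le_two (hw : Avoids123 w) :
    ∃ w', Avoids123 w' ∧ AlternationEquiv w w' ∧ ∀ c, w'.count c ≤ 2 := by
  induction hn : w.length using Nat.strong_induction_on generalizing w with
  | _ n ih =>
    by_cases hc : ∃ x, 3 ≤ w.count x
    · obtain ⟨x, hx⟩ := hc
      obtain ⟨w₁, hw₁, e₁, hlen⟩ := hw.exists_shorter hx
      obtain ⟨w₂, hw₂, e₂, hc₂⟩ := ih _ (hn ▸ hlen) hw₁ rfl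
      exact ⟨w₂, hw₂, e₁.trans e₂, hc₂⟩
    · push Not at hc
      exact ⟨w, hw, .refl w, fun c => by have := hc c; omega⟩

end Reduction

theorem stmt_3_general {V : Type*} (G : SimpleGraph V) (h : Rep123 G) :
    ∃ (L : Type) (inst : LinearOrder L) (f : V → L), Function.Injective f ∧
      ∃ w : List L, @Avoids123 L inst w ∧ RepresentsLab G f w ∧
        ¬ ∃ (x : L) (i j m : ℕ), i < j ∧ j < m ∧
          w[i]? = some x ∧ w[j]? = some x ∧ w[m]? = some x := by
  obtain ⟨L, inst, f, hf, w, hw, hrep⟩ := h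
  obtain ⟨w', hw', e, hcount⟩ := hw.exists_alternationEquiv_count_le_two
  refine ⟨L, inst, f, hf, w', hw', hrep.of_alternationEquiv hf e, ?_⟩
  rintro ⟨x, i, j, m, hij, hjm, hi, hj, hm⟩
  have h3 : replicate 3 x <+ w' := triple_sublist_of_getElem? hij hjm hi hj hm
  have := replicate_sublist_iff.mp h3
  have := hcount x
  omega

/-- if a finite graph `G` is 123-representable, then there is a 123-avoiding
word representing `G` (after a suitable injective relabeling of the vertices) in which every
letter appears at most twice (i.e. no letter occurs at three distinct positions). -/
theorem stmt_3 {V : Type*} [Fintype V] (G : SimpleGraph V) (h : Rep123 G) :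
    ∃ (L : Type) (inst : LinearOrder L) (f : V → L), Function.Injective f ∧
      ∃ w : List L, @Avoids123 L inst w ∧ RepresentsLab G f w ∧
        ¬ ∃ (x : L) (i j m : ℕ), i < j ∧ j < m ∧
          w[i]? = some x ∧ w[j]? = some x ∧ w[m]? = some x :=
  stmt_3_general G h
end

section
/- Let w be a word representing a graph G = (V, E) in which every letter appears at most twice, and let x, a, b be vertices with xa ∈ E, xb ∈ E, and ab ∉ E. Suppose w = u·x·v for some occurrence of x such that the letters a and b each occur both in u and in v. Then a and b appear in opposite relative orders on the two sides: a precedes b in u if and only if b precedes a in v. -/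
/-- `a` precedes `b` in the word `w`: some occurrence of `a` comes before some occurrence
of `b`. (When each of `a`, `b` occurs exactly once in `w`, this says the occurrence of `a`
is before the occurrence of `b`.) -/
def PrecedesIn {α : Type*} (w : List α) (a b : α) : Prop :=
  ∃ i j : ℕ, i < j ∧ w[i]? = some a ∧ w[j]? = some b

/-! If `a` preceded `b` on both sides of `x`, the word would contain the pattern `abab`. As no
letter occurs more than twice, these are all the occurrences of `a` and `b`, so `a` and `b`
alternate and hence are adjacent. Likewise `b` cannot precede `a` on both sides. -/

def AtMostTwice {α : Type*} (w : List α) : Prop :=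
  ¬ ∃ (y : α) (i j m : ℕ), i < j ∧ j < m ∧
    w[i]? = some y ∧ w[j]? = some y ∧ w[m]? = some y

namespace AtMostTwice

variable {α : Type*} {w : List α}

theorem eq_or_eq_of_getElem? (hw : AtMostTwice w) {y : α} {p q k : ℕ} (hpq : p < q)
    (hp : w[p]? = some y) (hq : w[q]? = some y) (hk : w[k]? = some y) : k = p ∨ k = q := by
  by_contra! h
  apply hw
  rcases lt_or_gt_of_ne h.1 with hkp | hpk
  · exact ⟨y, k, p, q, hkp, hpq, hk, hp, hq⟩
  rcases lt_or_gt_of_ne h.2 with hkq | hqk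
  · exact ⟨y, p, k, q, hpk, hkq, hp, hk, hq⟩
  · exact ⟨y, p, q, k, hpq, hqk, hp, hq, hk⟩

theorem alternates (hw : AtMostTwice w) {a b : α} {i j k l : ℕ}
    (hij : i < j) (hjk : j < k) (hkl : k < l) (hi : w[i]? = some a) (hj : w[j]? = some b)
    (hk : w[k]? = some a) (hl : w[l]? = some b) : Alternates w a b := by
  constructor
  · intro p q hpq hp hq
    rcases hw.eq_or_eq_of_getElem? (by omega) hi hk hp with rfl | rfl <;>
      rcases hw.eq_or_eq_of_getElem? (by omega) hi hk hq with rfl | rfl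
    all_goals first | omega | exact ⟨j, hij, hjk, hj⟩
  · intro p q hpq hp hq
    rcases hw.eq_or_eq_of_getElem? (by omega) hj hl hp with rfl | rfl <;>
      rcases hw.eq_or_eq_of_getElem? (by omega) hj hl hq with rfl | rfl
    all_goals first | omega | exact ⟨k, hjk, hkl, hk⟩

end AtMostTwice

section PrecedesIn

variable {α : Type*} {u v : List α} {a b : α}

theorem PrecedesIn.cons (h : PrecedesIn v a b) (x : α) : PrecedesIn (x :: v) a b := by
  obtain ⟨i, j, hij, hi, hj⟩ := h
  exact ⟨i + 1, j + 1, by omega, hi, hj⟩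

theorem precedesIn_or_precedesIn (hab : a ≠ b) (ha : a ∈ v) (hb : b ∈ v) :
    PrecedesIn v a b ∨ PrecedesIn v b a := by
  obtain ⟨i, hi, rfl⟩ := List.getElem_of_mem ha
  obtain ⟨j, hj, rfl⟩ := List.getElem_of_mem hb
  rcases lt_trichotomy i j with hij | rfl | hji
  · exact .inl ⟨i, j, hij, List.getElem?_eq_getElem hi, List.getElem?_eq_getElem hj⟩
  · exact absurd rfl hab
  · exact .inr ⟨j, i, hji, List.getElem?_eq_getElem hj, List.getElem?_eq_getElem hi⟩

theorem alternates_append_of_precedesIn (hw : AtMostTwice (u ++ v))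
    (hu : PrecedesIn u a b) (hv : PrecedesIn v a b) : Alternates (u ++ v) a b := by
  obtain ⟨i, j, hij, hi, hj⟩ := hu
  obtain ⟨k, l, hkl, hk, hl⟩ := hv
  have hju : j < u.length := (List.getElem?_eq_some_iff.mp hj).1
  have shift : ∀ m, (u ++ v)[u.length + m]? = v[m]? := fun m => by
    rw [List.getElem?_append_right (by omega), Nat.add_sub_cancel_left]
  refine hw.alternates (j := j) (k := u.length + k) (l := u.length + l) hij (by omega)
    (by omega) ?_ ?_ ?_ ?_
  · rwa [List.getElem?_append_left (by omega)]
  · rwa [List.getElem?_append_left hju]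
  · rwa [shift]
  · rwa [shift]

end PrecedesIn

theorem stmt_4_general {α : Type*} (G : SimpleGraph α) (w : List α)
    (hcount : ¬ ∃ (y : α) (i j m : ℕ), i < j ∧ j < m ∧
      w[i]? = some y ∧ w[j]? = some y ∧ w[m]? = some y)
    (hrep : Represents G w)
    (x a b : α) (hab : a ≠ b) (hnadj : ¬ G.Adj a b)
    (u v : List α) (hw : w = u ++ x :: v)
    (hau : a ∈ u) (hav : a ∈ v) (hbu : b ∈ u) (hbv : b ∈ v) :
    PrecedesIn u a b ↔ PrecedesIn v b a := by
  subst hw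
  have hcount : AtMostTwice (u ++ x :: v) := hcount
  have not_alt_ab : ¬ Alternates (u ++ x :: v) a b := (hrep.2 a b hab).not.mpr hnadj
  have not_alt_ba : ¬ Alternates (u ++ x :: v) b a :=
    (hrep.2 b a hab.symm).not.mpr fun h => hnadj h.symm
  constructor
  · intro hu
    refine (precedesIn_or_precedesIn hab hav hbv).resolve_left fun hv => not_alt_ab ?_
    exact alternates_append_of_precedesIn hcount hu (hv.cons x)
  · intro hv
    refine (precedesIn_or_precedesIn hab hau hbu).resolve_right fun hu => not_alt_ba ?_
    exact alternates_append_of_precedesIn hcount hu (hv.cons x)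

/-- let `w` be a word representing `G` in which every letter appears at most
twice, and let `x, a, b` be vertices with `xa ∈ E`, `xb ∈ E`, `ab ∉ E`. If `w = u·x·v` for
some occurrence of `x` such that `a` and `b` each occur both in `u` and in `v`, then `a` and
`b` appear in opposite relative orders on the two sides of `x`: `a` precedes `b` in `u` iff
`b` precedes `a` in `v`. -/
theorem stmt_4 {α : Type*} (G : SimpleGraph α) (w : List α)
    (hcount : ¬ ∃ (y : α) (i j m : ℕ), i < j ∧ j < m ∧
      w[i]? = some y ∧ w[j]? = some y ∧ w[m]? = some y)
    (hrep : Represents G w)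
    (x a b : α) (hxa : G.Adj x a) (hxb : G.Adj x b) (hab : a ≠ b) (hnadj : ¬ G.Adj a b)
    (u v : List α) (hw : w = u ++ x :: v)
    (hau : a ∈ u) (hav : a ∈ v) (hbu : b ∈ u) (hbv : b ∈ v) :
    PrecedesIn u a b ↔ PrecedesIn v b a :=
  stmt_4_general G w hcount hrep x a b hab hnadj u v hw hau hav hbu hbv
end

section
/- The star K_{1,6} (the graph on 7 vertices consisting of one center vertex adjacent to 6 leaves, with no other edges) is not 123-representable: for every injective labeling of its vertices by elements of a linearly ordered set, no 123-avoiding word represents it. -/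
/-!
Let `c` be the centre and `x₁ < ⋯ < x₆` the leaves. Between two occurrences of `c` lies an
occurrence of every leaf, so three occurrences of `c` and two leaves already contain a pattern
123: `c` occurs once or twice.

If `c` occurs once, at `p`, a leaf occurring twice does so on both sides of `p`, and two leaves
occurring once would alternate. Two non-alternating repeated leaves are nested around `p`. For
repeated leaves below `c`, avoiding 123 orders their occurrences before `p` decreasingly, so
nesting orders those after `p` increasingly: three of them give a 123; symmetrically above `c`.
Six leaves, at most one of them unrepeated, always contain three repeated ones on the same side
of `c`.

If `c` occurs at `p < q`, every leaf occurs exactly once between `p` and `q`, and at most once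
before `p` and once after `q`. As soon as some leaf is larger, a leaf below `c` cannot occur
before `p`; for two non-alternating such leaves the smaller one must then recur after `q`,
ahead of any recurrence of the larger one. Along three leaves below `c` this leaves no room for
the largest to recur; symmetrically above `c`. Wherever `c` sits among the leaves, `x₃` and
`x₄` end up occurring once each, so they alternate.
-/

section Words

variable {α : Type*} {w : List α} {c x y : α} {i j p q : ℕ}

lemma ne_of_getElem?_eq_some (hi : w[i]? = some x) (hj : w[j]? = some y) (hxy : x ≠ y) :
    i ≠ j := by
  rintro rfl
  exact hxy (Option.some.inj (hi.symm.trans hj))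

def Repeats (w : List α) (x : α) : Prop :=
  ∃ i j : ℕ, i < j ∧ w[i]? = some x ∧ w[j]? = some x

lemma alternates_of_not_repeats (hx : ¬ Repeats w x) (hy : ¬ Repeats w y) :
    Alternates w x y :=
  ⟨fun i j hij hi hj => (hx ⟨i, j, hij, hi, hj⟩).elim,
    fun i j hij hi hj => (hy ⟨i, j, hij, hi, hj⟩).elim⟩

lemma exists_gap_of_not_alternates (h : ¬ Alternates w x y) :
    (∃ i j : ℕ, i < j ∧ w[i]? = some x ∧ w[j]? = some x ∧
        ∀ k, i < k → k < j → w[k]? ≠ some y) ∨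
      ∃ i j : ℕ, i < j ∧ w[i]? = some y ∧ w[j]? = some y ∧
        ∀ k, i < k → k < j → w[k]? ≠ some x := by
  by_contra! ⟨hx, hy⟩
  exact h ⟨fun i j hij hi hj => by simpa [and_assoc] using hx i j hij hi hj,
    fun i j hij hi hj => by simpa [and_assoc] using hy i j hij hi hj⟩

def OccursExactlyAt (w : List α) (c : α) (p q : ℕ) : Prop :=
  w[p]? = some c ∧ w[q]? = some c ∧ ∀ k, w[k]? = some c → k = p ∨ k = q

def OccursBefore (w : List α) (x : α) (p : ℕ) : Prop :=
  ∃ k < p, w[k]? = some x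

def OccursAfter (w : List α) (x : α) (q : ℕ) : Prop :=
  ∃ k, q < k ∧ w[k]? = some x

namespace OccursExactlyAt

lemma ne_of_ne (hc : OccursExactlyAt w c p q) (hxc : x ≠ c) (hi : w[i]? = some x) :
    i ≠ p ∧ i ≠ q :=
  ⟨ne_of_getElem?_eq_some hi hc.1 hxc, ne_of_getElem?_eq_some hi hc.2.1 hxc⟩

lemma separates (hc : OccursExactlyAt w c p q) (hx : Alternates w c x)
    (hi : w[i]? = some x) (hj : w[j]? = some x) (hij : i < j) :
    i < p ∧ p < j ∨ i < q ∧ q < j := by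
  obtain ⟨k, hik, hkj, hk⟩ := hx.2 i j hij hi hj
  rcases hc.2.2 k hk with rfl | rfl
  exacts [Or.inl ⟨hik, hkj⟩, Or.inr ⟨hik, hkj⟩]

lemma eq_of_lt_iff_lt (hc : OccursExactlyAt w c p q) (hx : Alternates w c x)
    (hi : w[i]? = some x) (hj : w[j]? = some x) (hp : i < p ↔ j < p) (hq : i < q ↔ j < q) :
    i = j := by
  rcases lt_trichotomy i j with hij | rfl | hji
  · have := hc.separates hx hi hj hij
    omega
  · rfl
  · have := hc.separates hx hj hi hji
    omega

lemma exists_between (hc : OccursExactlyAt w c p q) (hpq : p < q) (hx : Alternates w c x) :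
    ∃ b, p < b ∧ b < q ∧ w[b]? = some x :=
  hx.1 p q hpq hc.1 hc.2.1

lemma not_repeats (hc : OccursExactlyAt w c p q) (hx : Alternates w c x)
    (hA : ¬ OccursBefore w x p) (hC : ¬ OccursAfter w x q) : ¬ Repeats w x := by
  rintro ⟨i, j, hij, hi, hj⟩
  rcases hc.separates hx hi hj hij with ⟨hip, -⟩ | ⟨-, hqj⟩
  exacts [hA ⟨i, hip, hi⟩, hC ⟨j, hqj, hj⟩]

lemma lt_of_not_alternates {ax bx ay by' : ℕ} (hc : OccursExactlyAt w c p p)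
    (hx : Alternates w c x) (hy : Alternates w c y) (hxy : x ≠ y) (hn : ¬ Alternates w x y)
    (hax : w[ax]? = some x) (hbx : w[bx]? = some x) (habx : ax < bx)
    (hay : w[ay]? = some y) (hby : w[by']? = some y) (haby : ay < by') (ha : ay < ax) :
    bx < by' := by
  have hsx := hc.separates hx hax hbx habx
  have hsy := hc.separates hy hay hby haby
  have hb := ne_of_getElem?_eq_some hbx hby hxy
  rcases exists_gap_of_not_alternates hn with
    ⟨i, j, hij, hi, hj, hgap⟩ | ⟨i, j, hij, hi, hj, hgap⟩
  · have hs := hc.separates hx hi hj hij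
    have : i = ax := hc.eq_of_lt_iff_lt hx hi hax (by omega) (by omega)
    have : j = bx := hc.eq_of_lt_iff_lt hx hj hbx (by omega) (by omega)
    have : ¬ (i < by' ∧ by' < j) := fun h => hgap by' h.1 h.2 hby
    omega
  · have hs := hc.separates hy hi hj hij
    have : i = ay := hc.eq_of_lt_iff_lt hy hi hay (by omega) (by omega)
    have : j = by' := hc.eq_of_lt_iff_lt hy hj hby (by omega) (by omega)
    have : ¬ (i < ax ∧ ax < j) := fun h => hgap ax h.1 h.2 hax
    omega

end OccursExactlyAt

end Words

section Avoidance

variable {L : Type*} [LinearOrder L] {w : List L} {c x y z : L} {i j k : ℕ}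

lemma Avoids123.false_of_lt_lt (h : Avoids123 w) (hij : i < j) (hjk : j < k)
    (hi : w[i]? = some x) (hj : w[j]? = some y) (hk : w[k]? = some z)
    (hxy : x < y) (hyz : y < z) : False :=
  h ⟨i, j, k, x, y, z, hij, hjk, hi, hj, hk, hxy, hyz⟩

lemma Avoids123.lt_of_below_later (h : Avoids123 w) (hi : w[i]? = some x)
    (hj : w[j]? = some y) (hk : w[k]? = some z) (hjk : j < k)
    (hxy : x < y) (hyz : y < z) : j < i := by
  rcases lt_or_gt_of_ne (ne_of_getElem?_eq_some hi hj hxy.ne) with hij | hji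
  · exact (h.false_of_lt_lt hij hjk hi hj hk hxy hyz).elim
  · exact hji

lemma Avoids123.lt_of_above_earlier (h : Avoids123 w) (hk : w[k]? = some z)
    (hi : w[i]? = some x) (hj : w[j]? = some y) (hki : k < i)
    (hzx : z < x) (hxy : x < y) : j < i := by
  rcases lt_or_gt_of_ne (ne_of_getElem?_eq_some hi hj hxy.ne) with hij | hji
  · exact (h.false_of_lt_lt hki hij hk hi hj hzx hxy).elim
  · exact hji

lemma Avoids123.false_of_three_occurrences (h : Avoids123 w) (hx : Alternates w c x)
    (hy : Alternates w c y) (hxc : x ≠ c) (hyc : y ≠ c) (hxy : x < y) (hij : i < j) (hjk : j < k)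
    (hi : w[i]? = some c) (hj : w[j]? = some c) (hk : w[k]? = some c) : False := by
  obtain ⟨u, hiu, huj, hu⟩ := hx.1 i j hij hi hj
  obtain ⟨v, hjv, hvk, hv⟩ := hy.1 j k hjk hj hk
  rcases lt_or_gt_of_ne hxc with hxc | hcx
  · rcases lt_or_gt_of_ne hyc with hyc | hcy
    · exact h.false_of_lt_lt (huj.trans hjv) hvk hu hv hk hxy hyc
    · exact h.false_of_lt_lt huj hjv hu hj hv hxc hcy
  · exact h.false_of_lt_lt hiu (huj.trans hjv) hi hu hv hcx hxy

lemma Avoids123.exists_occursExactlyAt (h : Avoids123 w) (hx : Alternates w c x)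
    (hy : Alternates w c y) (hxc : x ≠ c) (hyc : y ≠ c) (hxy : x < y) (hc : c ∈ w) :
    ∃ p q, p ≤ q ∧ OccursExactlyAt w c p q := by
  classical
  have hex : ∃ k, w[k]? = some c := List.mem_iff_getElem?.mp hc
  have hp := Nat.find_spec hex
  have hmin : ∀ k, w[k]? = some c → Nat.find hex ≤ k := fun k hk => Nat.find_min' hex hk
  by_cases hsecond : ∃ q, Nat.find hex < q ∧ w[q]? = some c
  · obtain ⟨q, hpq, hq⟩ := hsecond
    refine ⟨_, q, hpq.le, hp, hq, fun k hk => ?_⟩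
    rcases (hmin k hk).eq_or_lt with hpk | hpk
    · exact Or.inl hpk.symm
    rcases lt_trichotomy k q with hkq | hkq | hqk
    · exact (h.false_of_three_occurrences hx hy hxc hyc hxy hpk hkq hp hk hq).elim
    · exact Or.inr hkq
    · exact (h.false_of_three_occurrences hx hy hxc hyc hxy hpq hqk hp hq hk).elim
  · refine ⟨_, _, le_rfl, hp, hp, fun k hk => Or.inl ?_⟩
    by_contra hne
    exact hsecond ⟨k, (hmin k hk).lt_of_ne' hne, hk⟩

end Avoidance

lemma exists_three_of_pairwise_or {ι : Type*} [Preorder ι] {P : ι → Prop}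
    (h : ∀ i j, i ≠ j → P i ∨ P j) {i₁ i₂ i₃ i₄ : ι} (h₁₂ : i₁ < i₂) (h₂₃ : i₂ < i₃)
    (h₃₄ : i₃ < i₄) : ∃ i j k, i₁ ≤ i ∧ i < j ∧ j < k ∧ k ≤ i₄ ∧ P i ∧ P j ∧ P k := by
  by_cases hP₁ : P i₁
  · by_cases hP₂ : P i₂
    · rcases h i₃ i₄ h₃₄.ne with hP₃ | hP₄
      · exact ⟨i₁, i₂, i₃, le_rfl, h₁₂, h₂₃, h₃₄.le, hP₁, hP₂, hP₃⟩
      · exact ⟨i₁, i₂, i₄, le_rfl, h₁₂, h₂₃.trans h₃₄, le_rfl, hP₁, hP₂, hP₄⟩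
    · exact ⟨i₁, i₃, i₄, le_rfl, h₁₂.trans h₂₃, h₃₄, le_rfl, hP₁,
        (h i₂ i₃ h₂₃.ne).resolve_left hP₂, (h i₂ i₄ (h₂₃.trans h₃₄).ne).resolve_left hP₂⟩
  · exact ⟨i₂, i₃, i₄, h₁₂.le, h₂₃, h₃₄, le_rfl, (h i₁ i₂ h₁₂.ne).resolve_left hP₁,
      (h i₁ i₃ (h₁₂.trans h₂₃).ne).resolve_left hP₁,
      (h i₁ i₄ ((h₁₂.trans h₂₃).trans h₃₄).ne).resolve_left hP₁⟩

namespace OccursExactlyAt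

variable {L : Type*} [LinearOrder L] {w : List L} {c x y z : L} {p q : ℕ}

lemma false_of_repeats_below (hc : OccursExactlyAt w c p p) (hAv : Avoids123 w)
    (hx : Alternates w c x) (hy : Alternates w c y) (hz : Alternates w c z)
    (hxy : x < y) (hyz : y < z) (hzc : z < c)
    (hnxy : ¬ Alternates w x y) (hnyz : ¬ Alternates w y z)
    (rx : Repeats w x) (ry : Repeats w y) (rz : Repeats w z) : False := by
  obtain ⟨ax, bx, habx, hax, hbx⟩ := rx
  obtain ⟨ay, by', haby, hay, hby⟩ := ry
  obtain ⟨az, bz, habz, haz, hbz⟩ := rz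
  have hsx := hc.separates hx hax hbx habx
  have hsy := hc.separates hy hay hby haby
  have hsz := hc.separates hz haz hbz habz
  have hayx : ay < ax := hAv.lt_of_below_later hax hay hc.1 (by omega) hxy (hyz.trans hzc)
  have hazy : az < ay := hAv.lt_of_below_later hay haz hc.1 (by omega) hyz hzc
  exact hAv.false_of_lt_lt
    (hc.lt_of_not_alternates hx hy hxy.ne hnxy hax hbx habx hay hby haby hayx)
    (hc.lt_of_not_alternates hy hz hyz.ne hnyz hay hby haby haz hbz habz hazy)
    hbx hby hbz hxy hyz

lemma false_of_repeats_above (hc : OccursExactlyAt w c p p) (hAv : Avoids123 w)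
    (hx : Alternates w c x) (hy : Alternates w c y) (hz : Alternates w c z)
    (hcx : c < x) (hxy : x < y) (hyz : y < z)
    (hnxy : ¬ Alternates w x y) (hnyz : ¬ Alternates w y z)
    (rx : Repeats w x) (ry : Repeats w y) (rz : Repeats w z) : False := by
  obtain ⟨ax, bx, habx, hax, hbx⟩ := rx
  obtain ⟨ay, by', haby, hay, hby⟩ := ry
  obtain ⟨az, bz, habz, haz, hbz⟩ := rz
  have hsx := hc.separates hx hax hbx habx
  have hsy := hc.separates hy hay hby haby
  have hsz := hc.separates hz haz hbz habz
  have hbyx : by' < bx := hAv.lt_of_above_earlier hc.1 hbx hby (by omega) hcx hxy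
  have hbzy : bz < by' := hAv.lt_of_above_earlier hc.1 hby hbz (by omega) (hcx.trans hxy) hyz
  have haxy : ax < ay := by
    by_contra! h
    have := hc.lt_of_not_alternates hx hy hxy.ne hnxy hax hbx habx hay hby haby
      (h.lt_of_ne (ne_of_getElem?_eq_some hay hax hxy.ne'))
    omega
  have hayz : ay < az := by
    by_contra! h
    have := hc.lt_of_not_alternates hy hz hyz.ne hnyz hay hby haby haz hbz habz
      (h.lt_of_ne (ne_of_getElem?_eq_some haz hay hyz.ne'))
    omega
  exact hAv.false_of_lt_lt haxy hayz hax hay haz hxy hyz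

lemma exists_alternates_of_self (hc : OccursExactlyAt w c p p) (hAv : Avoids123 w)
    {e : Fin 6 → L} (he : StrictMono e) (hleaf : ∀ i, Alternates w c (e i))
    (hne : ∀ i, e i ≠ c) : ∃ i j, i ≠ j ∧ Alternates w (e i) (e j) := by
  by_contra! hn
  have hrep : ∀ i j, i ≠ j → Repeats w (e i) ∨ Repeats w (e j) := fun i j hij => by
    by_contra! h
    exact hn i j hij (alternates_of_not_repeats h.1 h.2)
  have below {i j k : Fin 6} (hij : i < j) (hjk : j < k) (hkc : e k < c) :=
    hc.false_of_repeats_below hAv (hleaf i) (hleaf j) (hleaf k) (he hij) (he hjk) hkc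
      (hn i j hij.ne) (hn j k hjk.ne)
  have above {i j k : Fin 6} (hij : i < j) (hjk : j < k) (hci : c < e i) :=
    hc.false_of_repeats_above hAv (hleaf i) (hleaf j) (hleaf k) hci (he hij) (he hjk)
      (hn i j hij.ne) (hn j k hjk.ne)
  rcases lt_or_gt_of_ne (hne 2) with h2 | h2
  · rcases lt_or_gt_of_ne (hne 3) with h3 | h3
    · obtain ⟨i, j, k, -, hij, hjk, hk, ri, rj, rk⟩ := exists_three_of_pairwise_or hrep
        (i₁ := 0) (i₂ := 1) (i₃ := 2) (i₄ := 3) (by decide) (by decide) (by decide)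
      exact below hij hjk ((he.monotone hk).trans_lt h3) ri rj rk
    · by_cases hlow : Repeats w (e 0) ∧ Repeats w (e 1) ∧ Repeats w (e 2)
      · exact below (i := 0) (j := 1) (by decide) (by decide) h2 hlow.1 hlow.2.1 hlow.2.2
      obtain ⟨s, hs, hns⟩ : ∃ s : Fin 6, s < 3 ∧ ¬ Repeats w (e s) := by
        by_contra! h
        exact hlow ⟨h 0 (by decide), h 1 (by decide), h 2 (by decide)⟩
      have hhigh (t : Fin 6) (ht : 3 ≤ t) : Repeats w (e t) :=
        (hrep s t (hs.trans_le ht).ne).resolve_left hns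
      exact above (i := 3) (j := 4) (k := 5) (by decide) (by decide) h3
        (hhigh 3 le_rfl) (hhigh 4 (by decide)) (hhigh 5 (by decide))
  · obtain ⟨i, j, k, hi, hij, hjk, -, ri, rj, rk⟩ := exists_three_of_pairwise_or hrep
      (i₁ := 2) (i₂ := 3) (i₃ := 4) (i₄ := 5) (by decide) (by decide) (by decide)
    exact above hij hjk (h2.trans_le (he.monotone hi)) ri rj rk

lemma not_occursBefore_of_lt (hc : OccursExactlyAt w c p q) (hAv : Avoids123 w) (hpq : p < q)
    (hz : Alternates w c z) (hzc : z ≠ c) (hxz : x < z) (hxc : x < c) :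
    ¬ OccursBefore w x p := by
  rintro ⟨k, hkp, hk⟩
  obtain ⟨b, hpb, hbq, hb⟩ := hc.exists_between hpq hz
  rcases lt_or_gt_of_ne hzc with hzc | hcz
  · exact hAv.false_of_lt_lt (hkp.trans hpb) hbq hk hb hc.2.1 hxz hzc
  · exact hAv.false_of_lt_lt hkp hpb hk hc.1 hb hxc hcz

lemma not_occursAfter_of_lt (hc : OccursExactlyAt w c p q) (hAv : Avoids123 w) (hpq : p < q)
    (hz : Alternates w c z) (hzc : z ≠ c) (hzx : z < x) (hcx : c < x) :
    ¬ OccursAfter w x q := by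
  rintro ⟨k, hqk, hk⟩
  obtain ⟨b, hpb, hbq, hb⟩ := hc.exists_between hpq hz
  rcases lt_or_gt_of_ne hzc with hzc | hcz
  · exact hAv.false_of_lt_lt hbq hqk hb hc.2.1 hk hzc hcx
  · exact hAv.false_of_lt_lt hpb (hbq.trans hqk) hc.1 hb hk hcz hzx

lemma exists_after_of_not_alternates (hc : OccursExactlyAt w c p q) (hAv : Avoids123 w)
    (hpq : p < q) (hx : Alternates w c x) (hy : Alternates w c y) (hxy : x < y) (hyc : y < c)
    (hyA : ¬ OccursBefore w y p) (hn : ¬ Alternates w x y) :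
    ∃ g, q < g ∧ w[g]? = some x ∧ ∀ g', q < g' → w[g']? = some y → g < g' := by
  obtain ⟨bx, hpbx, hbxq, hbx⟩ := hc.exists_between hpq hx
  obtain ⟨by', hpby, hbyq, hby⟩ := hc.exists_between hpq hy
  have hb : by' < bx := hAv.lt_of_below_later hbx hby hc.2.1 hbyq hxy hyc
  rcases exists_gap_of_not_alternates hn with
    ⟨i, j, hij, hi, hj, hgap⟩ | ⟨i, j, hij, hi, hj, hgap⟩
  · have hs := hc.separates hx hi hj hij
    have := hc.ne_of_ne (hxy.trans hyc).ne hi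
    have := hc.ne_of_ne (hxy.trans hyc).ne hj
    have : p < i → i < q → i = bx := fun _ _ => hc.eq_of_lt_iff_lt hx hi hbx (by omega) (by omega)
    have : p < j → j < q → j = bx := fun _ _ => hc.eq_of_lt_iff_lt hx hj hbx (by omega) (by omega)
    have : ¬ (i < by' ∧ by' < j) := fun h => hgap by' h.1 h.2 hby
    refine ⟨j, by omega, hj, fun g hqg hg => ?_⟩
    have := ne_of_getElem?_eq_some hj hg hxy.ne
    have : ¬ (i < g ∧ g < j) := fun h => hgap g h.1 h.2 hg
    omega
  · exfalso
    have hs := hc.separates hy hi hj hij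
    have := hc.ne_of_ne hyc.ne hi
    have : ¬ i < p := fun h => hyA ⟨i, h, hi⟩
    have : p < i → i < q → i = by' := fun _ _ => hc.eq_of_lt_iff_lt hy hi hby (by omega) (by omega)
    have : ¬ (i < bx ∧ bx < j) := fun h => hgap bx h.1 h.2 hbx
    omega

lemma exists_before_of_not_alternates (hc : OccursExactlyAt w c p q) (hAv : Avoids123 w)
    (hpq : p < q) (hx : Alternates w c x) (hy : Alternates w c y) (hcx : c < x) (hxy : x < y)
    (hxC : ¬ OccursAfter w x q) (hn : ¬ Alternates w x y) :
    ∃ a, a < p ∧ w[a]? = some y ∧ ∀ a', a' < p → w[a']? = some x → a' < a := by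
  obtain ⟨bx, hpbx, hbxq, hbx⟩ := hc.exists_between hpq hx
  obtain ⟨by', hpby, hbyq, hby⟩ := hc.exists_between hpq hy
  have hb : by' < bx := hAv.lt_of_above_earlier hc.1 hbx hby hpbx hcx hxy
  rcases exists_gap_of_not_alternates hn with
    ⟨i, j, hij, hi, hj, hgap⟩ | ⟨i, j, hij, hi, hj, hgap⟩
  · exfalso
    have hs := hc.separates hx hi hj hij
    have := hc.ne_of_ne hcx.ne' hj
    have : ¬ q < j := fun h => hxC ⟨j, h, hj⟩
    have : p < j → j < q → j = bx := fun _ _ => hc.eq_of_lt_iff_lt hx hj hbx (by omega) (by omega)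
    have : ¬ (i < by' ∧ by' < j) := fun h => hgap by' h.1 h.2 hby
    omega
  · have hs := hc.separates hy hi hj hij
    have := hc.ne_of_ne (hcx.trans hxy).ne' hi
    have : p < i → i < q → i = by' := fun _ _ => hc.eq_of_lt_iff_lt hy hi hby (by omega) (by omega)
    have : ¬ (i < bx ∧ bx < j) := fun h => hgap bx h.1 h.2 hbx
    refine ⟨i, by omega, hi, fun a hap ha => ?_⟩
    have := ne_of_getElem?_eq_some ha hi hxy.ne
    have : ¬ (i < a ∧ a < j) := fun h => hgap a h.1 h.2 ha
    omega

variable {x₁ x₂ x₃ : L}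

lemma not_occursAfter_of_chain (hc : OccursExactlyAt w c p q) (hAv : Avoids123 w) (hpq : p < q)
    (hx₁ : Alternates w c x₁) (hx₂ : Alternates w c x₂) (hx₃ : Alternates w c x₃)
    (h₁₂ : x₁ < x₂) (h₂₃ : x₂ < x₃) (h₃ : x₃ < c)
    (hA₂ : ¬ OccursBefore w x₂ p) (hA₃ : ¬ OccursBefore w x₃ p)
    (hn₁₂ : ¬ Alternates w x₁ x₂) (hn₂₃ : ¬ Alternates w x₂ x₃) : ¬ OccursAfter w x₃ q := by
  rintro ⟨g₃, hqg₃, hg₃⟩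
  obtain ⟨g₁, -, hg₁, hlt₁⟩ :=
    hc.exists_after_of_not_alternates hAv hpq hx₁ hx₂ h₁₂ (h₂₃.trans h₃) hA₂ hn₁₂
  obtain ⟨g₂, hqg₂, hg₂, hlt₂⟩ :=
    hc.exists_after_of_not_alternates hAv hpq hx₂ hx₃ h₂₃ h₃ hA₃ hn₂₃
  exact hAv.false_of_lt_lt (hlt₁ g₂ hqg₂ hg₂) (hlt₂ g₃ hqg₃ hg₃) hg₁ hg₂ hg₃ h₁₂ h₂₃

lemma not_occursBefore_of_chain (hc : OccursExactlyAt w c p q) (hAv : Avoids123 w) (hpq : p < q)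
    (hx₁ : Alternates w c x₁) (hx₂ : Alternates w c x₂) (hx₃ : Alternates w c x₃)
    (h₁ : c < x₁) (h₁₂ : x₁ < x₂) (h₂₃ : x₂ < x₃)
    (hC₁ : ¬ OccursAfter w x₁ q) (hC₂ : ¬ OccursAfter w x₂ q)
    (hn₁₂ : ¬ Alternates w x₁ x₂) (hn₂₃ : ¬ Alternates w x₂ x₃) : ¬ OccursBefore w x₁ p := by
  rintro ⟨a₁, ha₁p, ha₁⟩
  obtain ⟨a₂, ha₂p, ha₂, hlt₁⟩ :=
    hc.exists_before_of_not_alternates hAv hpq hx₁ hx₂ h₁ h₁₂ hC₁ hn₁₂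
  obtain ⟨a₃, -, ha₃, hlt₂⟩ :=
    hc.exists_before_of_not_alternates hAv hpq hx₂ hx₃ (h₁.trans h₁₂) h₂₃ hC₂ hn₂₃
  exact hAv.false_of_lt_lt (hlt₁ a₁ ha₁p ha₁) (hlt₂ a₂ ha₂p ha₂) ha₁ ha₂ ha₃ h₁₂ h₂₃

lemma exists_alternates_of_lt (hc : OccursExactlyAt w c p q) (hAv : Avoids123 w) (hpq : p < q)
    {e : Fin 6 → L} (he : StrictMono e) (hleaf : ∀ i, Alternates w c (e i))
    (hne : ∀ i, e i ≠ c) : ∃ i j, i ≠ j ∧ Alternates w (e i) (e j) := by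
  by_contra! hn
  have noA (i j : Fin 6) (hij : i < j) (hic : e i < c) :=
    hc.not_occursBefore_of_lt hAv hpq (hleaf j) (hne j) (he hij) hic
  have noC (i j : Fin 6) (hij : i < j) (hcj : c < e j) :=
    hc.not_occursAfter_of_lt hAv hpq (hleaf i) (hne i) (he hij) hcj
  have chainBelow (i j k : Fin 6) (hij : i < j) (hjk : j < k) (hkc : e k < c)
      (hAj : ¬ OccursBefore w (e j) p) (hAk : ¬ OccursBefore w (e k) p) :=
    hc.not_occursAfter_of_chain hAv hpq (hleaf i) (hleaf j) (hleaf k) (he hij) (he hjk) hkc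
      hAj hAk (hn i j hij.ne) (hn j k hjk.ne)
  have chainAbove (i j k : Fin 6) (hij : i < j) (hjk : j < k) (hci : c < e i)
      (hCi : ¬ OccursAfter w (e i) q) (hCj : ¬ OccursAfter w (e j) q) :=
    hc.not_occursBefore_of_chain hAv hpq (hleaf i) (hleaf j) (hleaf k) hci (he hij) (he hjk)
      hCi hCj (hn i j hij.ne) (hn j k hjk.ne)
  suffices (¬ OccursBefore w (e 2) p ∧ ¬ OccursAfter w (e 2) q) ∧
      (¬ OccursBefore w (e 3) p ∧ ¬ OccursAfter w (e 3) q) from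
    hn 2 3 (by decide) (alternates_of_not_repeats
      (hc.not_repeats (hleaf 2) this.1.1 this.1.2) (hc.not_repeats (hleaf 3) this.2.1 this.2.2))
  have h12 : e 1 < e 2 := he (by decide)
  have h23 : e 2 < e 3 := he (by decide)
  have h34 : e 3 < e 4 := he (by decide)
  rcases lt_or_gt_of_ne (hne 2) with h2 | h2
  · have hA₁ := noA 1 2 (by decide) (h12.trans h2)
    rcases lt_or_gt_of_ne (hne 3) with h3 | h3
    · have hA₂ := noA 2 3 (by decide) h2
      have hA₃ := noA 3 4 (by decide) h3
      exact ⟨⟨hA₂, chainBelow 0 1 2 (by decide) (by decide) h2 hA₁ hA₂⟩,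
        hA₃, chainBelow 1 2 3 (by decide) (by decide) h3 hA₂ hA₃⟩
    · have hA₂ := noA 2 3 (by decide) h2
      have hC₃ := noC 2 3 (by decide) h3
      have hC₄ := noC 2 4 (by decide) (h3.trans h34)
      exact ⟨⟨hA₂, chainBelow 0 1 2 (by decide) (by decide) h2 hA₁ hA₂⟩,
        chainAbove 3 4 5 (by decide) (by decide) h3 hC₃ hC₄, hC₃⟩
  · have hC₂ := noC 0 2 (by decide) h2
    have hC₃ := noC 0 3 (by decide) (h2.trans h23)
    have hC₄ := noC 0 4 (by decide) ((h2.trans h23).trans h34)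
    exact ⟨⟨chainAbove 2 3 4 (by decide) (by decide) h2 hC₂ hC₃, hC₂⟩,
      chainAbove 3 4 5 (by decide) (by decide) (h2.trans h23) hC₃ hC₄, hC₃⟩

end OccursExactlyAt

theorem Avoids123.exists_alternates_of_star {L : Type*} [LinearOrder L] {w : List L} {c : L}
    (hAv : Avoids123 w) (hc : c ∈ w) {e : Fin 6 → L} (he : StrictMono e)
    (hleaf : ∀ i, Alternates w c (e i)) (hne : ∀ i, e i ≠ c) :
    ∃ i j, i ≠ j ∧ Alternates w (e i) (e j) := by
  obtain ⟨p, q, hpq, hocc⟩ :=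
    hAv.exists_occursExactlyAt (hleaf 0) (hleaf 1) (hne 0) (hne 1) (he (by decide)) hc
  rcases hpq.eq_or_lt with rfl | hpq
  · exact hocc.exists_alternates_of_self hAv he hleaf hne
  · exact hocc.exists_alternates_of_lt hAv hpq he hleaf hne

/-- the star `K_{1,6}` (the complete bipartite graph with parts of sizes 1 and
6) is not 123-representable: for every injective labeling of its vertices by elements of a
linearly ordered set, no 123-avoiding word represents it. -/
theorem stmt_5 :
    ∀ (L : Type*) [LinearOrder L] (f : Fin 1 ⊕ Fin 6 → L), Function.Injective f →
      ¬ ∃ w : List L, Avoids123 w ∧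
        RepresentsLab (completeBipartiteGraph (Fin 1) (Fin 6)) f w := by
  rintro L _ f hf ⟨w, hAv, -, hmem, hadj⟩
  have he : StrictMono ((f ∘ Sum.inr) ∘ Tuple.sort (f ∘ Sum.inr)) :=
    (Tuple.monotone_sort _).strictMono_of_injective
      (hf.comp (Sum.inr_injective.comp (Equiv.injective _)))
  obtain ⟨i, j, hij, halt⟩ := hAv.exists_alternates_of_star (hmem (.inl 0)) he
    (fun _ => (hadj _ _ Sum.inl_ne_inr).2 (by simp)) (fun _ => hf.ne Sum.inr_ne_inl)
  simpa using (hadj _ _ (by simpa using hij)).1 halt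
end

section
/- For every n ≥ 1, the path graph P_n on vertices 1, 2, …, n (with edges exactly between i and i+1 for 1 ≤ i ≤ n−1) is 123-representable. -/
/-- The path graph `P_n`: vertices `0, …, n-1` (standing for `1, …, n`), with edges exactly
between consecutive vertices `i` and `i+1`. -/
def pathG (n : ℕ) : SimpleGraph (Fin n) :=
  SimpleGraph.fromRel (fun i j => (i : ℕ) + 1 = (j : ℕ))

/-!
The word `0 1 0 2 1 3 2 … (n-1) (n-2) (n-1)` uses every letter twice, and the two occurrences
of `x` are interleaved with those of `y` exactly when `|x - y| = 1`, so it represents `P_n`.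
Each of its letters is at least any earlier letter minus one, so it has no strictly decreasing
subsequence of length three; labelling the vertices in the reversed order `ℕᵒᵈ` makes it
123-avoiding.
-/

open OrderDual

section TwoOccurrences

variable {α : Type*} {w : List α} {x y : α} {a b c d : ℕ}

theorem forall_occurrences_exists_between_iff (hx : ∀ p, w[p]? = some x ↔ p = a ∨ p = b)
    (hab : a < b) :
    (∀ i j : ℕ, i < j → w[i]? = some x → w[j]? = some x →
        ∃ k : ℕ, i < k ∧ k < j ∧ w[k]? = some y) ↔
      ∃ k : ℕ, a < k ∧ k < b ∧ w[k]? = some y := by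
  refine ⟨fun h ↦ h a b hab ((hx a).2 (.inl rfl)) ((hx b).2 (.inr rfl)), ?_⟩
  intro hk i j hij hi hj
  rcases (hx i).1 hi with rfl | rfl <;> rcases (hx j).1 hj with rfl | rfl <;>
    first | exact hk | omega

theorem exists_occurrence_between_iff (hy : ∀ p, w[p]? = some y ↔ p = c ∨ p = d) :
    (∃ k : ℕ, a < k ∧ k < b ∧ w[k]? = some y) ↔
      (a < c ∧ c < b) ∨ (a < d ∧ d < b) := by
  simp only [hy]
  constructor
  · rintro ⟨k, hak, hkb, rfl | rfl⟩ <;> simp [*]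
  · rintro (⟨hac, hcb⟩ | ⟨had, hdb⟩)
    exacts [⟨c, hac, hcb, .inl rfl⟩, ⟨d, had, hdb, .inr rfl⟩]

theorem alternates_iff_of_occurrences (hx : ∀ p, w[p]? = some x ↔ p = a ∨ p = b) (hab : a < b)
    (hy : ∀ p, w[p]? = some y ↔ p = c ∨ p = d) (hcd : c < d) :
    Alternates w x y ↔
      ((a < c ∧ c < b) ∨ (a < d ∧ d < b)) ∧ ((c < a ∧ a < d) ∨ (c < b ∧ b < d)) := by
  rw [Alternates, forall_occurrences_exists_between_iff hx hab,
    forall_occurrences_exists_between_iff hy hcd, exists_occurrence_between_iff hy,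
    exists_occurrence_between_iff hx]

end TwoOccurrences

section PathWord

/-- The letter at position `p` of `0 1 0 2 1 3 2 … (n-1) (n-2) (n-1)`: truncated subtraction and
the `min` produce the first and the last letter. -/
def pathLetter (n p : ℕ) : ℕ :=
  if p % 2 = 0 then p / 2 - 1 else min (p / 2 + 1) (n - 1)

def pathWord (n : ℕ) : List ℕᵒᵈ :=
  (List.range (2 * n)).map fun p ↦ toDual (pathLetter n p)

variable {n p : ℕ}

theorem pathLetter_lt (hp : p < 2 * n) : pathLetter n p < n := by
  unfold pathLetter; split_ifs <;> omega

theorem pathLetter_le_succ {q : ℕ} (hpq : p < q) (hq : q < 2 * n) :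
    pathLetter n p ≤ pathLetter n q + 1 := by
  unfold pathLetter; split_ifs <;> omega

theorem getElem?_pathWord_eq_some_iff {a : ℕᵒᵈ} :
    (pathWord n)[p]? = some a ↔ p < 2 * n ∧ toDual (pathLetter n p) = a := by
  by_cases hp : p < 2 * n <;> simp [pathWord, hp]

theorem getElem?_pathWord_eq_toDual_iff {x : ℕ} (hx : x < n) :
    (pathWord n)[p]? = some (toDual x) ↔
      p = 2 * x - 1 ∨ p = min (2 * x + 2) (2 * n - 1) := by
  rw [getElem?_pathWord_eq_some_iff, toDual_inj]
  unfold pathLetter; split_ifs <;> omega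

theorem alternates_pathWord_iff {x y : ℕ} (hx : x < n) (hy : y < n) :
    Alternates (pathWord n) (toDual x) (toDual y) ↔ x + 1 = y ∨ y + 1 = x := by
  rw [alternates_iff_of_occurrences (fun _ ↦ getElem?_pathWord_eq_toDual_iff hx) (by omega)
    (fun _ ↦ getElem?_pathWord_eq_toDual_iff hy) (by omega)]
  omega

theorem avoids123_pathWord (n : ℕ) : Avoids123 (pathWord n) := by
  rintro ⟨i, j, k, a, b, c, hij, hjk, hi, hj, hk, hab, hbc⟩
  obtain ⟨-, rfl⟩ := getElem?_pathWord_eq_some_iff.1 hi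
  obtain ⟨-, rfl⟩ := getElem?_pathWord_eq_some_iff.1 hj
  obtain ⟨hk_lt, rfl⟩ := getElem?_pathWord_eq_some_iff.1 hk
  rw [toDual_lt_toDual] at hab hbc
  have := pathLetter_le_succ (hij.trans hjk) hk_lt
  omega

end PathWord

theorem stmt_7_general (n : ℕ) : Rep123 (pathG n) := by
  refine ⟨ℕᵒᵈ, inferInstance, fun v ↦ toDual (v : ℕ), fun u v h ↦ Fin.ext h,
    pathWord n, avoids123_pathWord n, ?_, ?_, ?_⟩
  · intro l hl
    obtain ⟨p, hp, rfl⟩ := List.mem_map.1 hl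
    exact ⟨⟨pathLetter n p, pathLetter_lt (List.mem_range.1 hp)⟩, rfl⟩
  · intro v
    exact List.mem_of_getElem? ((getElem?_pathWord_eq_toDual_iff v.isLt).2 (.inl rfl))
  · intro x y hxy
    rw [alternates_pathWord_iff x.isLt y.isLt]
    simp [pathG, SimpleGraph.fromRel_adj, hxy]

/-- for every `n ≥ 1`, the path graph `P_n` is 123-representable. -/
theorem stmt_7 (n : ℕ) (hn : 1 ≤ n) : Rep123 (pathG n) :=
  stmt_7_general n
end

section
/- For every n ≥ 3, the cycle graph C_n on vertices 1, 2, …, n (with edges between i and i+1 for 1 ≤ i ≤ n−1 and between n and 1) is 123-representable. -/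
/-- The cycle graph `C_n`: vertices `0, …, n-1` (standing for `1, …, n`), with edges between
consecutive vertices `i` and `i+1`, together with the edge between `n-1` and `0` (i.e.
between `n` and `1`). -/
def cycleG (n : ℕ) : SimpleGraph (Fin n) :=
  SimpleGraph.fromRel (fun i j =>
    (i : ℕ) + 1 = (j : ℕ) ∨ ((i : ℕ) = n - 1 ∧ (j : ℕ) = 0))

/-
A word in which every letter occurs exactly twice is a chord diagram, and two of its letters
alternate iff their chords interleave. A staircase of chords `(2i, 2i+3)` realises a path, and
one or two long chords close it into the cycle; how they fit depends on the parity of `n`.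
Even vertices get large labels and odd vertices small ones, both decreasing in the index, so
the word is a shuffle of two weakly decreasing words and has no increasing subsequence of
length 3.
-/

def Interleaved (a b c d : ℕ) : Prop :=
  a < c ∧ c < b ∧ b < d ∨ c < a ∧ a < d ∧ d < b

theorem alternates_iff_interleaved {α : Type*} {w : List α} {x y : α} {a b c d : ℕ}
    (hab : a < b) (hcd : c < d)
    (hx : ∀ k, w[k]? = some x ↔ k = a ∨ k = b)
    (hy : ∀ k, w[k]? = some y ↔ k = c ∨ k = d) :
    Alternates w x y ↔ Interleaved a b c d := by
  have ha := (hx a).2 (.inl rfl)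
  have hb := (hx b).2 (.inr rfl)
  have hc := (hy c).2 (.inl rfl)
  have hd := (hy d).2 (.inr rfl)
  constructor
  · rintro ⟨hxy, hyx⟩
    obtain ⟨k, hak, hkb, hk⟩ := hxy a b hab ha hb
    obtain ⟨l, hcl, hld, hl⟩ := hyx c d hcd hc hd
    have := (hy k).1 hk
    have := (hx l).1 hl
    unfold Interleaved
    omega
  · intro h
    constructor
    · intro i j hij hi hj
      have := (hx i).1 hi
      have := (hx j).1 hj
      rcases h with h | h
      · exact ⟨c, by omega, by omega, hc⟩
      · exact ⟨d, by omega, by omega, hd⟩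
    · intro i j hij hi hj
      have := (hy i).1 hi
      have := (hy j).1 hj
      rcases h with h | h
      · exact ⟨b, by omega, by omega, hb⟩
      · exact ⟨a, by omega, by omega, ha⟩

theorem avoids123_of_antitone_on_classes {α : Type*} [LinearOrder α] {w : List α}
    (upper : ℕ → Prop)
    (h : ∀ p q a b, p < q → w[p]? = some a → w[q]? = some b → (upper p ↔ upper q) → b ≤ a) :
    Avoids123 w := by
  rintro ⟨i, j, k, a, b, c, hij, hjk, hi, hj, hk, hab, hbc⟩
  by_cases hij' : upper i ↔ upper j
  · exact (h i j a b hij hi hj hij').not_gt hab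
  by_cases hjk' : upper j ↔ upper k
  · exact (h j k b c hjk hj hk hjk').not_gt hbc
  exact (h i k a c (hij.trans hjk) hi hk (by tauto)).not_gt (hab.trans hbc)

theorem getElem?_map_range_eq_some {α : Type*} {N k : ℕ} {u : ℕ → α} {v : α} :
    ((List.range N).map u)[k]? = some v ↔ k < N ∧ u k = v := by
  simp [List.getElem?_eq_some_iff]

theorem rep123_of_chords {n N : ℕ} {G : SimpleGraph (Fin n)} {L : Type} [LinearOrder L]
    (label : ℕ → L) (first second vertexAt : ℕ → ℕ) (upper : ℕ → Prop)
    (label_injOn : Set.InjOn label (Set.Iio n))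
    (chord_lt : ∀ i < n, first i < second i ∧ second i < N)
    (vertexAt_lt : ∀ p < N, vertexAt p < n)
    (vertexAt_eq_iff : ∀ i < n, ∀ p < N, vertexAt p = i ↔ p = first i ∨ p = second i)
    (adj_iff : ∀ i j : Fin n, i ≠ j →
      (G.Adj i j ↔ Interleaved (first i) (second i) (first j) (second j)))
    (antitone_on_classes : ∀ p q, p < q → q < N → (upper p ↔ upper q) →
      label (vertexAt q) ≤ label (vertexAt p)) :
    Rep123 G := by
  set w := (List.range N).map (label ∘ vertexAt)
  have occurrences (i : Fin n) (k : ℕ) : w[k]? = some (label i) ↔ k = first i ∨ k = second i := by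
    rw [getElem?_map_range_eq_some]
    constructor
    · rintro ⟨hk, hlabel⟩
      exact (vertexAt_eq_iff i i.2 k hk).1 (label_injOn (vertexAt_lt k hk) i.2 hlabel)
    · intro hk
      have hkN : k < N := by have := chord_lt i i.2; omega
      exact ⟨hkN, congrArg label ((vertexAt_eq_iff i i.2 k hkN).2 hk)⟩
  refine ⟨L, inferInstance, fun i => label i, fun i j h => Fin.ext (label_injOn i.2 j.2 h),
    w, ?_, ?_, fun i => List.mem_iff_getElem?.2 ⟨first i, (occurrences i _).2 (.inl rfl)⟩, ?_⟩
  · refine avoids123_of_antitone_on_classes upper fun p q a b hpq hp hq hclass => ?_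
    rw [getElem?_map_range_eq_some] at hp hq
    exact hp.2 ▸ hq.2 ▸ antitone_on_classes p q hpq hq.1 hclass
  · intro l hl
    obtain ⟨p, hp, rfl⟩ := List.mem_map.1 hl
    exact ⟨⟨vertexAt p, vertexAt_lt p (List.mem_range.1 hp)⟩, rfl⟩
  · intro i j hij
    rw [alternates_iff_interleaved (chord_lt i i.2).1 (chord_lt j j.2).1 (occurrences i)
      (occurrences j), adj_iff i j hij]

-- The middle value `n` is taken only by vertex `n - 1` of an even cycle, the one odd vertex
-- whose label must exceed those of all other odd vertices.
def cycleLabel (n i : ℕ) : ℕ :=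
  if i % 2 = 0 then 2 * n - i else if i = n - 1 then n else n - i

theorem cycleLabel_injOn (n : ℕ) : Set.InjOn (cycleLabel n) (Set.Iio n) := by
  intro i hi j hj h
  simp only [Set.mem_Iio] at hi hj
  unfold cycleLabel at h
  split_ifs at h <;> omega

theorem cycleG_adj_iff {n : ℕ} (i j : Fin n) :
    (cycleG n).Adj i j ↔ i ≠ j ∧ ((i : ℕ) + 1 = j ∨ (j : ℕ) + 1 = i ∨
      ((i : ℕ) = n - 1 ∧ (j : ℕ) = 0) ∨ ((j : ℕ) = n - 1 ∧ (i : ℕ) = 0)) := by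
  rw [cycleG, SimpleGraph.fromRel_adj]
  tauto

namespace OddCycle

def first (n i : ℕ) : ℕ := if i = n - 1 then 1 else 2 * i

def second (n i : ℕ) : ℕ := if i = n - 1 then 2 * n - 2 else 2 * i + 3

def vertexAt (n p : ℕ) : ℕ :=
  if p = 1 ∨ p = 2 * n - 2 then n - 1 else if p % 2 = 0 then p / 2 else p / 2 - 1

def upper (p : ℕ) : Prop := p % 4 = 0 ∨ p % 4 = 3

variable {n : ℕ}

theorem cycleLabel_vertexAt_of_upper {p : ℕ} (hp : p < 2 * n) (h : upper p) :
    cycleLabel n (vertexAt n p) = 2 * n - 2 * (p / 4) := by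
  simp only [upper] at h
  simp only [cycleLabel, vertexAt]
  split_ifs <;> omega

theorem cycleLabel_vertexAt_of_not_upper (hodd : n % 2 = 1) {p : ℕ} (hp : p < 2 * n)
    (h : ¬ upper p) : cycleLabel n (vertexAt n p) = n + 1 - 2 * ((p + 2) / 4) := by
  simp only [upper] at h
  simp only [cycleLabel, vertexAt]
  split_ifs <;> omega

theorem cycleLabel_vertexAt_antitone (hodd : n % 2 = 1) {p q : ℕ} (hpq : p < q)
    (hq : q < 2 * n) (hclass : upper p ↔ upper q) :
    cycleLabel n (vertexAt n q) ≤ cycleLabel n (vertexAt n p) := by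
  have hp : p < 2 * n := hpq.trans hq
  by_cases hup : upper p
  · rw [cycleLabel_vertexAt_of_upper hq (hclass.1 hup), cycleLabel_vertexAt_of_upper hp hup]
    omega
  · rw [cycleLabel_vertexAt_of_not_upper hodd hq (hclass.not.1 hup),
      cycleLabel_vertexAt_of_not_upper hodd hp hup]
    omega

theorem rep123 (hn : 3 ≤ n) (hodd : n % 2 = 1) : Rep123 (cycleG n) := by
  refine rep123_of_chords (N := 2 * n) (cycleLabel n) (first n) (second n) (vertexAt n) upper
    (cycleLabel_injOn n) ?_ ?_ ?_ ?_
    (fun p q hpq hq => cycleLabel_vertexAt_antitone hodd hpq hq)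
  · intro i hi
    simp only [first, second]
    split_ifs <;> omega
  · intro p hp
    simp only [vertexAt]
    split_ifs <;> omega
  · intro i hi p hp
    simp only [first, second, vertexAt]
    split_ifs <;> omega
  · intro i j hij
    rw [cycleG_adj_iff, ← Fin.val_ne_iff]
    simp only [Interleaved, first, second]
    split_ifs <;> omega

end OddCycle

namespace EvenCycle

def first (n i : ℕ) : ℕ := if i = n - 2 then 0 else if i = n - 1 then 2 else 2 * i + 1

def second (n i : ℕ) : ℕ :=
  if i = n - 2 then 2 * n - 3 else if i = n - 1 then 2 * n - 1 else 2 * i + 4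

def vertexAt (n p : ℕ) : ℕ :=
  if p = 0 ∨ p = 2 * n - 3 then n - 2
  else if p = 2 ∨ p = 2 * n - 1 then n - 1
  else if p % 2 = 1 then p / 2 else p / 2 - 2

def upper (n p : ℕ) : Prop := (p % 4 ≤ 1 ∧ p ≠ 0) ∨ p = 2 * n - 1

variable {n : ℕ}

theorem cycleLabel_vertexAt_of_upper (heven : n % 2 = 0) {p : ℕ} (hp : p < 2 * n)
    (h : upper n p) :
    cycleLabel n (vertexAt n p) = if p = 2 * n - 1 then n else 2 * n + 2 - 2 * ((p + 3) / 4) := by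
  simp only [upper] at h
  simp only [cycleLabel, vertexAt]
  split_ifs <;> omega

theorem cycleLabel_vertexAt_of_not_upper (heven : n % 2 = 0) {p : ℕ} (hp : p < 2 * n)
    (h : ¬ upper n p) : cycleLabel n (vertexAt n p) =
      if p = 0 then n + 2 else if p = 2 then n else n + 1 - 2 * ((p + 1) / 4) := by
  simp only [upper] at h
  simp only [cycleLabel, vertexAt]
  split_ifs <;> omega

theorem cycleLabel_vertexAt_antitone (heven : n % 2 = 0) {p q : ℕ} (hpq : p < q)
    (hq : q < 2 * n) (hclass : upper n p ↔ upper n q) :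
    cycleLabel n (vertexAt n q) ≤ cycleLabel n (vertexAt n p) := by
  have hp : p < 2 * n := hpq.trans hq
  by_cases hup : upper n p
  · rw [cycleLabel_vertexAt_of_upper heven hq (hclass.1 hup),
      cycleLabel_vertexAt_of_upper heven hp hup]
    split_ifs <;> omega
  · rw [cycleLabel_vertexAt_of_not_upper heven hq (hclass.not.1 hup),
      cycleLabel_vertexAt_of_not_upper heven hp hup]
    split_ifs <;> omega

theorem rep123 (hn : 3 ≤ n) (heven : n % 2 = 0) : Rep123 (cycleG n) := by
  refine rep123_of_chords (N := 2 * n) (cycleLabel n) (first n) (second n) (vertexAt n)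
    (upper n) (cycleLabel_injOn n) ?_ ?_ ?_ ?_
    (fun p q hpq hq => cycleLabel_vertexAt_antitone heven hpq hq)
  · intro i hi
    simp only [first, second]
    split_ifs <;> omega
  · intro p hp
    simp only [vertexAt]
    split_ifs <;> omega
  · intro i hi p hp
    simp only [first, second, vertexAt]
    split_ifs <;> omega
  · intro i j hij
    rw [cycleG_adj_iff, ← Fin.val_ne_iff]
    simp only [Interleaved, first, second]
    split_ifs <;> omega

end EvenCycle

/-- for every `n ≥ 3`, the cycle graph `C_n` is 123-representable. -/
theorem stmt_8 (n : ℕ) (hn : 3 ≤ n) : Rep123 (cycleG n) := by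
  rcases Nat.mod_two_eq_zero_or_one n with h | h
  · exact EvenCycle.rep123 hn h
  · exact OddCycle.rep123 hn h
end

section
/- For every n > 3, the complete graph K_n cannot be represented by a 2-uniform 132-avoiding word: for every injective labeling of its vertices by elements of a linearly ordered set, no 2-uniform 132-avoiding word represents K_n. -/
def OccursOnlyAt {α : Type*} (w : List α) (x : α) (i j : ℕ) : Prop :=
  i < j ∧ w[i]? = some x ∧ w[j]? = some x ∧ ∀ k, w[k]? = some x → k = i ∨ k = j

section Occurrences

variable {α : Type*} {w : List α} {x y : α} {i j i' j' : ℕ}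

theorem TwoUniform.exists_occursOnlyAt (hw : TwoUniform w) (hx : x ∈ w) :
    ∃ i j, OccursOnlyAt w x i j := by
  obtain ⟨i, j, hij, hi, hj, honly⟩ := hw x hx
  rcases hij.lt_or_gt with h | h
  · exact ⟨i, j, h, hi, hj, honly⟩
  · exact ⟨j, i, h, hj, hi, fun k hk => (honly k hk).symm⟩

theorem Alternates.lt_of_occursOnlyAt (halt : Alternates w x y)
    (hx : OccursOnlyAt w x i j) (hy : OccursOnlyAt w y i' j') : i < j' := by
  obtain ⟨k, -, hkj', hk⟩ := halt.2 i' j' hy.1 hy.2.1 hy.2.2.1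
  rcases hx.2.2.2 k hk with rfl | rfl
  · exact hkj'
  · exact hx.1.trans hkj'

theorem Alternates.lt_of_lt_of_occursOnlyAt (halt : Alternates w x y)
    (hx : OccursOnlyAt w x i j) (hy : OccursOnlyAt w y i' j') (hii' : i < i') :
    j < j' := by
  by_contra! hj'j
  obtain ⟨k, hi'k, hkj', hk⟩ := halt.2 i' j' hy.1 hy.2.1 hy.2.2.1
  rcases hx.2.2.2 k hk with rfl | rfl <;> omega

end Occurrences

theorem Finset.exists_lt_lt_lt_of_three_lt_card {α : Type*} [LinearOrder α] {s : Finset α}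
    (hs : 3 < s.card) : ∃ a ∈ s, ∃ b ∈ s, ∃ c ∈ s, ∃ d ∈ s, a < b ∧ b < c ∧ c < d := by
  let e := s.orderEmbOfFin rfl
  have he : ∀ m (hm : m < s.card), e ⟨m, hm⟩ ∈ s := fun m hm => s.orderEmbOfFin_mem rfl _
  exact ⟨_, he 0 (by omega), _, he 1 (by omega), _, he 2 (by omega), _, he 3 hs,
    e.strictMono (by simp [Fin.lt_def]), e.strictMono (by simp [Fin.lt_def]),
    e.strictMono (by simp [Fin.lt_def])⟩

/- With `a < b < c < d`: if `b` first occurs before `d`, then `b`, the first `d` and the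
second `c` form a 132; otherwise `a`, the second `d` and the second `b` do. -/
theorem TwoUniform.not_avoids132_of_lt_of_lt_of_lt {α : Type*} [LinearOrder α] {w : List α}
    (hw : TwoUniform w) {a b c d : α} (ha : a ∈ w) (hb : b ∈ w) (hc : c ∈ w) (hd : d ∈ w)
    (hab : a < b) (hbc : b < c) (hcd : c < d) (had : Alternates w a d)
    (hdb : Alternates w d b) (hdc : Alternates w d c) : ¬ Avoids132 w := by
  obtain ⟨ia, ja, hoa⟩ := hw.exists_occursOnlyAt ha
  obtain ⟨ib, jb, hob⟩ := hw.exists_occursOnlyAt hb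
  obtain ⟨ic, jc, hoc⟩ := hw.exists_occursOnlyAt hc
  obtain ⟨id, jd, hod⟩ := hw.exists_occursOnlyAt hd
  have hibd : ib ≠ id := by
    rintro rfl
    exact (hbc.trans hcd).ne (Option.some.inj (hob.2.1.symm.trans hod.2.1))
  refine not_not_intro ?_
  rcases hibd.lt_or_gt with hlt | hlt
  · exact ⟨ib, id, jc, b, d, c, hlt, hdc.lt_of_occursOnlyAt hod hoc, hob.2.1, hod.2.1,
      hoc.2.2.1, hbc, hcd⟩
  · exact ⟨ia, jd, jb, a, d, b, had.lt_of_occursOnlyAt hoa hod,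
      hdb.lt_of_lt_of_occursOnlyAt hod hob hlt, hoa.2.1, hod.2.2.1, hob.2.2.1, hab,
      hbc.trans hcd⟩

theorem TwoUniform.not_avoids132_of_pairwise_alternates {α : Type*} [LinearOrder α]
    {w : List α} (hw : TwoUniform w) (halt : ∀ x ∈ w, ∀ y ∈ w, x ≠ y → Alternates w x y)
    (hcard : 3 < w.toFinset.card) : ¬ Avoids132 w := by
  obtain ⟨a, ha, b, hb, c, hc, d, hd, hab, hbc, hcd⟩ :=
    Finset.exists_lt_lt_lt_of_three_lt_card hcard
  simp only [List.mem_toFinset] at ha hb hc hd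
  exact hw.not_avoids132_of_lt_of_lt_of_lt ha hb hc hd hab hbc hcd
    (halt a ha d hd (hab.trans (hbc.trans hcd)).ne) (halt d hd b hb (hbc.trans hcd).ne')
    (halt d hd c hc hcd.ne')

/-- for every `n > 3`, the complete graph `K_n` cannot be represented by a
2-uniform 132-avoiding word: for every injective labeling of its vertices by elements of a
linearly ordered set, no 2-uniform 132-avoiding word represents `K_n`. -/
theorem stmt_14 (n : ℕ) (hn : 3 < n) :
    ∀ (L : Type*) [LinearOrder L] (f : Fin n → L), Function.Injective f →
      ¬ ∃ w : List L, TwoUniform w ∧ Avoids132 w ∧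
        RepresentsLab (⊤ : SimpleGraph (Fin n)) f w := by
  rintro L _ f hf ⟨w, hw, h132, hlab, hmem, hrep⟩
  have halt : ∀ x ∈ w, ∀ y ∈ w, x ≠ y → Alternates w x y := by
    intro x hx y hy hxy
    obtain ⟨u, rfl⟩ := hlab x hx
    obtain ⟨v, rfl⟩ := hlab y hy
    have huv : u ≠ v := ne_of_apply_ne f hxy
    exact (hrep u v huv).2 ((SimpleGraph.top_adj u v).2 huv)
  have hcard : 3 < w.toFinset.card := calc
    3 < n := hn
    _ = (Finset.univ.image f).card := by simp [Finset.card_image_of_injective _ hf]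
    _ ≤ w.toFinset.card := Finset.card_le_card fun l hl => by
      obtain ⟨v, -, rfl⟩ := Finset.mem_image.1 hl
      exact List.mem_toFinset.2 (hmem v)
  exact hw.not_avoids132_of_pairwise_alternates halt hcard h132
end
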